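/- arXiv:1408.2084 — 5 statements merged into one kernel-verified Lean document; each statement's English description precedes it below -/
import Mathlib

section
/- Under the same setup, the commutator of time-differentiation and weighted averaging satisfies | d/dR ⟨f⟩ − ⟨f_R⟩ | ≤ (πK²/R³) ⟨|f|⟩ ‖(e^{2η})_θ‖_{L¹(S¹)}. -/
/-!
Write `w = a⁻¹` and `E = e^{2η}`. The equation for `a` says `∂_R w = c E w` with
`c = K²/(2R³)`, so differentiating under the integral sign gives
`d/dR ⟨f⟩ − ⟨f_R⟩ = c (⟨f E⟩ − ⟨f⟩⟨E⟩)`, a covariance for the probability measure `w dθ / P`.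
Writing it as `⟨f (E − ⟨E⟩)⟩` and bounding `|E θ − E s|` by the total variation
`∫ |E_θ|` gives `c ⟨|f|⟩ ‖E_θ‖_{L¹}`, and `c ≤ πK²/R³`.
-/

open Real MeasureTheory intervalIntegral Set Metric

section PartialDerivative

variable {G : ℝ → ℝ → ℝ}

theorem hasDerivAt_deriv_of_contDiff_uncurry (hG : ContDiff ℝ 1 fun p : ℝ × ℝ => G p.1 p.2)
    (r θ : ℝ) : HasDerivAt (fun r => G r θ) (deriv (fun r => G r θ) r) r :=
  ((hG.differentiable one_ne_zero).comp (differentiable_id.prodMk (differentiable_const θ))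
    r).hasDerivAt

theorem continuous_deriv_of_contDiff_uncurry (hG : ContDiff ℝ 1 fun p : ℝ × ℝ => G p.1 p.2) :
    Continuous fun p : ℝ × ℝ => deriv (fun r => G r p.2) p.1 := by
  have hchain (p : ℝ × ℝ) :
      deriv (fun r => G r p.2) p.1 = fderiv ℝ (fun p : ℝ × ℝ => G p.1 p.2) p (1, 0) :=
    ((hG.differentiable one_ne_zero p).hasFDerivAt.comp_hasDerivAt (x := p.1)
      (f := fun r => (r, p.2)) ((hasDerivAt_id p.1).prodMk (hasDerivAt_const p.1 p.2))).deriv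
  simpa only [hchain] using (hG.continuous_fderiv one_ne_zero).clm_apply continuous_const

theorem hasDerivAt_intervalIntegral_of_contDiff_uncurry
    (hG : ContDiff ℝ 1 fun p : ℝ × ℝ => G p.1 p.2) (a b R : ℝ) :
    HasDerivAt (fun r => ∫ θ in a..b, G r θ) (∫ θ in a..b, deriv (fun r => G r θ) R) R := by
  have hG' := continuous_deriv_of_contDiff_uncurry hG
  obtain ⟨C, hC⟩ := ((isCompact_closedBall R 1).prod isCompact_uIcc).exists_bound_of_continuousOn
    hG'.continuousOn
  refine (hasDerivAt_integral_of_dominated_loc_of_deriv_le (bound := fun _ => C)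
    (ball_mem_nhds R one_pos)
    (.of_forall fun r => (hG.continuous.uncurry_left r).aestronglyMeasurable)
    ((hG.continuous.uncurry_left R).intervalIntegrable _ _)
    (hG'.uncurry_left R).aestronglyMeasurable ?_ intervalIntegrable_const
    (.of_forall fun θ _ r _ => hasDerivAt_deriv_of_contDiff_uncurry hG r θ)).2
  refine .of_forall fun θ hθ r hr => ?_
  simpa using hC (r, θ) ⟨ball_subset_closedBall hr, uIoc_subset_uIcc hθ⟩

end PartialDerivative

theorem abs_sub_le_integral_abs_deriv {E : ℝ → ℝ} (hE : ContDiff ℝ 1 E) {a b s t : ℝ}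
    (hs : s ∈ Icc a b) (ht : t ∈ Icc a b) : |E t - E s| ≤ ∫ x in a..b, |deriv E x| := by
  wlog hst : s ≤ t generalizing s t
  · rw [abs_sub_comm]; exact this ht hs (le_of_not_ge hst)
  have hE' : Continuous fun x => |deriv E x| := (hE.continuous_deriv le_rfl).abs
  calc |E t - E s| ≤ ∫ x in s..t, |deriv E x| :=
        norm_sub_le_integral_of_norm_deriv_le_of_le hst hE.continuous.continuousOn
          (hE.differentiable one_ne_zero).differentiableOn (.of_forall fun _ _ => le_rfl)
          (hE'.intervalIntegrable _ _)
    _ ≤ ∫ x in a..b, |deriv E x| :=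
        integral_mono_interval hs.1 hst ht.2 (.of_forall fun _ => abs_nonneg _)
          (hE'.intervalIntegrable _ _)

theorem hasDerivAt_inv_of_deriv_two_mul_log {u : ℝ → ℝ} {x k : ℝ} (hu : DifferentiableAt ℝ u x)
    (hx : u x ≠ 0) (hk : deriv (fun r => 2 * log (u r)) x = -k) :
    HasDerivAt (fun r => (u r)⁻¹) (k / 2 * (u x)⁻¹) x := by
  rw [deriv_const_mul _ (hu.log hx), (hu.hasDerivAt.log hx).deriv] at hk
  have hu' : deriv u x = -(k / 2 * u x) := by
    field_simp at hk ⊢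
    linarith
  refine (hu.hasDerivAt.inv hx).congr_deriv ?_
  rw [hu']
  field_simp

section WeightedIntegral

variable {a b M : ℝ} {E w : ℝ → ℝ}

theorem abs_mul_integral_sub_integral_mul_le (hab : a ≤ b) (hE : Continuous E)
    (hw : Continuous w) (hw0 : ∀ x, 0 ≤ w x) {t : ℝ} (hM : ∀ s ∈ Icc a b, |E t - E s| ≤ M) :
    |E t * (∫ x in a..b, w x) - ∫ x in a..b, E x * w x| ≤ M * ∫ x in a..b, w x := by
  have hdiff : E t * (∫ x in a..b, w x) - ∫ x in a..b, E x * w x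
      = ∫ x in a..b, (E t - E x) * w x := by
    simp only [sub_mul]
    rw [integral_sub ((continuous_const.fun_mul hw).intervalIntegrable _ _)
      ((hE.fun_mul hw).intervalIntegrable _ _), intervalIntegral.integral_const_mul]
  rw [hdiff, ← intervalIntegral.integral_const_mul]
  refine (abs_integral_le_integral_abs hab).trans <| integral_mono_on hab
    (((continuous_const.sub hE).mul hw).abs.intervalIntegrable _ _)
    ((continuous_const.mul hw).intervalIntegrable _ _) fun s hs => ?_
  rw [abs_mul, abs_of_nonneg (hw0 s)]
  exact mul_le_mul_of_nonneg_right (hM s hs) (hw0 s)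

theorem abs_integral_mul_sub_le {f : ℝ → ℝ} (hab : a ≤ b) (hf : Continuous f)
    (hE : Continuous E) (hw : Continuous w) (hw0 : ∀ x, 0 ≤ w x)
    (hM : ∀ s ∈ Icc a b, ∀ t ∈ Icc a b, |E t - E s| ≤ M) :
    |(∫ x in a..b, w x) * (∫ x in a..b, f x * E x * w x)
        - (∫ x in a..b, E x * w x) * ∫ x in a..b, f x * w x|
      ≤ M * (∫ x in a..b, w x) * ∫ x in a..b, |f x| * w x := by
  set P := ∫ x in a..b, w x
  set S := ∫ x in a..b, E x * w x
  have hcov : P * (∫ x in a..b, f x * E x * w x) - S * ∫ x in a..b, f x * w x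
      = ∫ x in a..b, f x * w x * (E x * P - S) := by
    have hpt : (fun x => f x * w x * (E x * P - S))
        = fun x => P * (f x * E x * w x) - S * (f x * w x) := by
      funext x; ring
    rw [hpt, integral_sub (((hf.fun_mul hE).fun_mul hw).const_mul P |>.intervalIntegrable _ _)
      (((hf.fun_mul hw).const_mul S).intervalIntegrable _ _), intervalIntegral.integral_const_mul,
      intervalIntegral.integral_const_mul]
  rw [hcov, mul_comm (M * P), ← intervalIntegral.integral_mul_const]
  refine (abs_integral_le_integral_abs hab).trans <| integral_mono_on hab
    (((hf.mul hw).mul ((hE.mul continuous_const).sub continuous_const)).abs.intervalIntegrable _ _)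
    (((hf.abs.mul hw).mul continuous_const).intervalIntegrable _ _) fun t ht => ?_
  rw [abs_mul, abs_mul, abs_of_nonneg (hw0 t)]
  exact mul_le_mul_of_nonneg_left
    (abs_mul_integral_sub_integral_mul_le hab hE hw hw0 (hM · · t ht))
    (mul_nonneg (abs_nonneg _) (hw0 t))

theorem abs_inv_sq_mul_integral_mul_sub_le {f : ℝ → ℝ} (hab : a ≤ b) (hf : Continuous f)
    (hE : Continuous E) (hw : Continuous w) (hw0 : ∀ x, 0 ≤ w x)
    (hM : ∀ s ∈ Icc a b, ∀ t ∈ Icc a b, |E t - E s| ≤ M) :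
    |(∫ x in a..b, w x)⁻¹ ^ 2 * ((∫ x in a..b, w x) * (∫ x in a..b, f x * E x * w x)
        - (∫ x in a..b, E x * w x) * ∫ x in a..b, f x * w x)|
      ≤ M * ((∫ x in a..b, w x)⁻¹ * ∫ x in a..b, |f x| * w x) := by
  rw [abs_mul, abs_of_nonneg (sq_nonneg _)]
  calc _ ≤ (∫ x in a..b, w x)⁻¹ ^ 2 * (M * (∫ x in a..b, w x) * ∫ x in a..b, |f x| * w x) := by
        gcongr
        exact abs_integral_mul_sub_le hab hf hE hw hw0 hM
    _ = M * ((∫ x in a..b, w x)⁻¹ * ∫ x in a..b, |f x| * w x) := by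
        rcases eq_or_ne (∫ x in a..b, w x) 0 with hP | hP
        · simp [hP]
        · field_simp

end WeightedIntegral

theorem hasDerivAt_inv_integral_mul_integral {a b c R : ℝ} {w f : ℝ → ℝ → ℝ} {E : ℝ → ℝ}
    (hw : ContDiff ℝ 1 fun p : ℝ × ℝ => w p.1 p.2) (hf : ContDiff ℝ 1 fun p : ℝ × ℝ => f p.1 p.2)
    (hE : Continuous E) (hw' : ∀ θ, HasDerivAt (fun r => w r θ) (c * E θ * w R θ) R)
    (hP : ∫ θ in a..b, w R θ ≠ 0) :
    HasDerivAt (fun r => (∫ θ in a..b, w r θ)⁻¹ * ∫ θ in a..b, f r θ * w r θ)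
      ((∫ θ in a..b, w R θ)⁻¹ * (∫ θ in a..b, deriv (fun r => f r θ) R * w R θ)
        + c * ((∫ θ in a..b, w R θ)⁻¹ ^ 2 * ((∫ θ in a..b, w R θ)
          * (∫ θ in a..b, f R θ * E θ * w R θ)
          - (∫ θ in a..b, E θ * w R θ) * ∫ θ in a..b, f R θ * w R θ))) R := by
  have hfR := hf.continuous.uncurry_left R
  have hwR := hw.continuous.uncurry_left R
  have hf'R := (continuous_deriv_of_contDiff_uncurry hf).uncurry_left
    (f := fun r θ => deriv (fun r => f r θ) r) R
  have hP' : HasDerivAt (fun r => ∫ θ in a..b, w r θ) (c * ∫ θ in a..b, E θ * w R θ) R := by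
    convert hasDerivAt_intervalIntegral_of_contDiff_uncurry hw a b R using 1
    rw [← intervalIntegral.integral_const_mul]
    simp only [(hw' _).deriv, mul_assoc]
  have hI' : HasDerivAt (fun r => ∫ θ in a..b, f r θ * w r θ)
      ((∫ θ in a..b, deriv (fun r => f r θ) R * w R θ) + c * ∫ θ in a..b, f R θ * E θ * w R θ)
      R := by
    convert hasDerivAt_intervalIntegral_of_contDiff_uncurry
      (G := fun r θ => f r θ * w r θ) (hf.mul hw) a b R using 1
    rw [← intervalIntegral.integral_const_mul, ← integral_add
      ((hf'R.fun_mul hwR).intervalIntegrable _ _)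
      ((((hfR.fun_mul hE).fun_mul hwR).const_mul c).intervalIntegrable _ _)]
    refine integral_congr fun θ _ => ?_
    rw [((hasDerivAt_deriv_of_contDiff_uncurry hf R θ).fun_mul (hw' θ)).deriv]
    ring
  refine ((hP'.inv hP).mul hI').congr_deriv ?_
  simp only [Pi.inv_apply]
  field_simp
  ring

theorem commutator_estimate_general
    (K R₀ : ℝ) (hR₀ : 0 < R₀)
    (a η f : ℝ → ℝ → ℝ)
    (ha : ContDiff ℝ (⊤ : ℕ∞) (fun p : ℝ × ℝ => a p.1 p.2))
    (hη : ContDiff ℝ (⊤ : ℕ∞) (fun p : ℝ × ℝ => η p.1 p.2))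
    (hf : ContDiff ℝ (⊤ : ℕ∞) (fun p : ℝ × ℝ => f p.1 p.2))
    (hapos : ∀ R θ, 0 < a R θ)
    (haeq : ∀ R ∈ Set.Ici R₀, ∀ θ,
      deriv (fun r => 2 * Real.log (a r θ)) R = -(K ^ 2 / R ^ 3) * Real.exp (2 * η R θ))
    (P : ℝ → ℝ) (hPdef : ∀ R, P R = ∫ θ in (0:ℝ)..(2 * π), (a R θ)⁻¹)
    (R : ℝ) (hR : R ∈ Set.Ici R₀) :
    |deriv (fun r => (P r)⁻¹ * ∫ θ in (0:ℝ)..(2 * π), f r θ * (a r θ)⁻¹) R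
        - (P R)⁻¹ * ∫ θ in (0:ℝ)..(2 * π), deriv (fun r => f r θ) R * (a R θ)⁻¹|
      ≤ π * K ^ 2 / R ^ 3 *
          ((P R)⁻¹ * ∫ θ in (0:ℝ)..(2 * π), |f R θ| * (a R θ)⁻¹) *
          ∫ θ in (0:ℝ)..(2 * π), |deriv (fun t => Real.exp (2 * η R t)) θ| := by
  have hle : (1 : WithTop ℕ∞) ≤ (⊤ : ℕ∞) := by exact_mod_cast le_top
  have hR0 : 0 < R := hR₀.trans_le hR
  have hw : ContDiff ℝ 1 fun p : ℝ × ℝ => (a p.1 p.2)⁻¹ :=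
    (ha.of_le hle).inv fun p => (hapos p.1 p.2).ne'
  have hE : ContDiff ℝ 1 fun θ => exp (2 * η R θ) :=
    contDiff_exp.comp (contDiff_const.mul ((hη.of_le hle).comp (contDiff_const.prodMk contDiff_id)))
  have hw' (θ : ℝ) : HasDerivAt (fun r => (a r θ)⁻¹)
      (K ^ 2 / (2 * R ^ 3) * exp (2 * η R θ) * (a R θ)⁻¹) R :=
    (hasDerivAt_inv_of_deriv_two_mul_log
      (hasDerivAt_deriv_of_contDiff_uncurry (ha.of_le hle) R θ).differentiableAt
      (hapos R θ).ne' ((haeq R hR θ).trans (neg_mul _ _))).congr_deriv (by ring)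
  obtain rfl : P = fun r => ∫ θ in (0:ℝ)..(2 * π), (a r θ)⁻¹ := funext hPdef
  have hwR : Continuous fun θ => (a R θ)⁻¹ :=
    hw.continuous.uncurry_left (f := fun r θ => (a r θ)⁻¹) R
  have hP0 : 0 < ∫ θ in (0:ℝ)..(2 * π), (a R θ)⁻¹ :=
    intervalIntegral_pos_of_pos (hwR.intervalIntegrable _ _)
      (fun θ => inv_pos.2 (hapos R θ)) (by positivity)
  have hc : K ^ 2 / (2 * R ^ 3) ≤ π * K ^ 2 / R ^ 3 := by
    rw [div_le_div_iff₀ (by positivity) (by positivity)]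
    nlinarith [pi_gt_three, mul_nonneg (sq_nonneg K) (pow_pos hR0 3).le]
  rw [(hasDerivAt_inv_integral_mul_integral hw (hf.of_le hle) hE.continuous hw' hP0.ne').deriv,
    add_sub_cancel_left, abs_mul, abs_of_nonneg (by positivity)]
  refine (mul_le_mul hc (abs_inv_sq_mul_integral_mul_sub_le (f := f R) (by positivity)
    (hf.continuous.uncurry_left R) hE.continuous hwR (fun θ => (inv_pos.2 (hapos R θ)).le)
    fun s hs t ht => abs_sub_le_integral_abs_deriv hE hs ht) (abs_nonneg _)
    (by positivity)).trans_eq ?_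
  ring

/-- Commutator estimate between time-differentiation and the weighted average
`⟨f⟩ = P⁻¹ ∫_{S¹} f a⁻¹ dθ`:
`| d/dR ⟨f⟩ − ⟨f_R⟩ | ≤ (πK²/R³) ⟨|f|⟩ ‖(e^{2η})_θ‖_{L¹(S¹)}`. -/
theorem commutator_estimate
    (K R₀ : ℝ) (hR₀ : 0 < R₀)
    (a η f : ℝ → ℝ → ℝ)
    (ha : ContDiff ℝ (⊤ : ℕ∞) (fun p : ℝ × ℝ => a p.1 p.2))
    (hη : ContDiff ℝ (⊤ : ℕ∞) (fun p : ℝ × ℝ => η p.1 p.2))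
    (hf : ContDiff ℝ (⊤ : ℕ∞) (fun p : ℝ × ℝ => f p.1 p.2))
    (hapos : ∀ R θ, 0 < a R θ)
    (haper : ∀ R, Function.Periodic (a R) (2 * π))
    (hηper : ∀ R, Function.Periodic (η R) (2 * π))
    (hfper : ∀ R, Function.Periodic (f R) (2 * π))
    (haeq : ∀ R ∈ Set.Ici R₀, ∀ θ,
      deriv (fun r => 2 * Real.log (a r θ)) R = -(K ^ 2 / R ^ 3) * Real.exp (2 * η R θ))
    (P : ℝ → ℝ) (hPdef : ∀ R, P R = ∫ θ in (0:ℝ)..(2 * π), (a R θ)⁻¹)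
    (R : ℝ) (hR : R ∈ Set.Ici R₀) :
    |deriv (fun r => (P r)⁻¹ * ∫ θ in (0:ℝ)..(2 * π), f r θ * (a r θ)⁻¹) R
        - (P R)⁻¹ * ∫ θ in (0:ℝ)..(2 * π), deriv (fun r => f r θ) R * (a R θ)⁻¹|
      ≤ π * K ^ 2 / R ^ 3 *
          ((P R)⁻¹ * ∫ θ in (0:ℝ)..(2 * π), |f R θ| * (a R θ)⁻¹) *
          ∫ θ in (0:ℝ)..(2 * π), |deriv (fun t => Real.exp (2 * η R t)) θ| :=
  commutator_estimate_general K R₀ hR₀ a η f ha hη hf hapos haeq P hPdef R hR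
end

section
/- Define E = a^{-1} U_R² + a U_θ² and 𝓔(R) = ∫_{S¹} E dθ. Suppose U, a, η are smooth on [R₀,∞) × S¹ and satisfy (R a^{-1} U_R)_R − (R a U_θ)_θ = 0 and (2 ln a)_R = −(K²/R³) e^{2η}. Then d𝓔/dR = −(K²/(2R³)) ∫_{S¹} E e^{2η} dθ − (2/R) ∫_{S¹} a^{-1} U_R² dθ. In particular 𝓔 is non-increasing. -/
open Real MeasureTheory intervalIntegral

/-!
Multiplying the wave equation `(R a⁻¹ U_R)_R = (R a U_θ)_θ` by `2 U_R / R` and using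
`∂_R ∂_θ U = ∂_θ ∂_R U` turns `∂_R E` into a divergence plus lower-order terms:
`∂_R E = (a_R / a) E - (2 / R) a⁻¹ U_R² + ∂_θ (2 a U_R U_θ)`.
The flux `2 a U_R U_θ` is `2π`-periodic, so its `θ`-derivative integrates to zero, and the
equation for `a` says `a_R / a = -(K² / (2R³)) e^{2η}`. Differentiating `𝓔` under the integral
sign gives the identity, whose right-hand side is `≤ 0` since `a > 0`.
-/

open Function (uncurry Periodic)

noncomputable def derivFst {E : Type*} [NormedAddCommGroup E] [NormedSpace ℝ E]
    (f : ℝ → ℝ → E) (R θ : ℝ) : E :=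
  deriv (fun r => f r θ) R

noncomputable def derivSnd {E : Type*} [NormedAddCommGroup E] [NormedSpace ℝ E]
    (f : ℝ → ℝ → E) (R θ : ℝ) : E :=
  deriv (f R) θ

section PartialDerivatives

variable {E : Type*} [NormedAddCommGroup E] [NormedSpace ℝ E] {R θ : ℝ}

theorem hasDerivAt_partial_fst {F : ℝ × ℝ → E} (hF : DifferentiableAt ℝ F (R, θ)) :
    HasDerivAt (fun r => F (r, θ)) (fderiv ℝ F (R, θ) (1, 0)) R :=
  (hF.hasFDerivAt.comp_hasDerivAt R ((hasDerivAt_id R).prodMk (hasDerivAt_const R θ)) :)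

theorem hasDerivAt_partial_snd {F : ℝ × ℝ → E} (hF : DifferentiableAt ℝ F (R, θ)) :
    HasDerivAt (fun t => F (R, t)) (fderiv ℝ F (R, θ) (0, 1)) θ :=
  (hF.hasFDerivAt.comp_hasDerivAt θ ((hasDerivAt_const θ R).prodMk (hasDerivAt_id θ)) :)

variable {f : ℝ → ℝ → E} {n m : WithTop ℕ∞}

theorem derivFst_eq_fderiv (hf : DifferentiableAt ℝ (uncurry f) (R, θ)) :
    derivFst f R θ = fderiv ℝ (uncurry f) (R, θ) (1, 0) :=
  (hasDerivAt_partial_fst hf).deriv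

theorem derivSnd_eq_fderiv (hf : DifferentiableAt ℝ (uncurry f) (R, θ)) :
    derivSnd f R θ = fderiv ℝ (uncurry f) (R, θ) (0, 1) :=
  (hasDerivAt_partial_snd hf).deriv

theorem hasDerivAt_derivFst (hf : DifferentiableAt ℝ (uncurry f) (R, θ)) :
    HasDerivAt (fun r => f r θ) (derivFst f R θ) R :=
  (hasDerivAt_partial_fst hf).differentiableAt.hasDerivAt

theorem hasDerivAt_derivSnd (hf : DifferentiableAt ℝ (uncurry f) (R, θ)) :
    HasDerivAt (f R) (derivSnd f R θ) θ :=
  (hasDerivAt_partial_snd hf).differentiableAt.hasDerivAt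

theorem ContDiff.uncurry_derivFst (hf : ContDiff ℝ n (uncurry f)) (hmn : m + 1 ≤ n) :
    ContDiff ℝ m (uncurry (derivFst f)) := by
  have hd : Differentiable ℝ (uncurry f) := hf.differentiable (ne_bot_of_le_ne_bot (by simp) hmn)
  rw [show uncurry (derivFst f) = fun p => fderiv ℝ (uncurry f) p (1, 0) from
    funext fun p => derivFst_eq_fderiv (hd p)]
  exact (hf.fderiv_right hmn).clm_apply contDiff_const

theorem ContDiff.uncurry_derivSnd (hf : ContDiff ℝ n (uncurry f)) (hmn : m + 1 ≤ n) :
    ContDiff ℝ m (uncurry (derivSnd f)) := by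
  have hd : Differentiable ℝ (uncurry f) := hf.differentiable (ne_bot_of_le_ne_bot (by simp) hmn)
  rw [show uncurry (derivSnd f) = fun p => fderiv ℝ (uncurry f) p (0, 1) from
    funext fun p => derivSnd_eq_fderiv (hd p)]
  exact (hf.fderiv_right hmn).clm_apply contDiff_const

theorem derivFst_derivSnd_comm (hf : ContDiff ℝ 2 (uncurry f)) :
    derivFst (derivSnd f) = derivSnd (derivFst f) := by
  funext R θ
  have hd : Differentiable ℝ (uncurry f) := hf.differentiable (by simp)
  have hd2 : Differentiable ℝ (fderiv ℝ (uncurry f)) :=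
    (hf.fderiv_right (m := 1) (by norm_num)).differentiable one_ne_zero
  have hR : HasDerivAt (fun r => fderiv ℝ (uncurry f) (r, θ) (0, 1))
      (fderiv ℝ (fderiv ℝ (uncurry f)) (R, θ) (1, 0) (0, 1)) R := by
    simpa using (hasDerivAt_partial_fst (hd2 (R, θ))).clm_apply
      (hasDerivAt_const R ((0 : ℝ), (1 : ℝ)))
  have hθ : HasDerivAt (fun t => fderiv ℝ (uncurry f) (R, t) (1, 0))
      (fderiv ℝ (fderiv ℝ (uncurry f)) (R, θ) (0, 1) (1, 0)) θ := by
    simpa using (hasDerivAt_partial_snd (hd2 (R, θ))).clm_apply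
      (hasDerivAt_const θ ((1 : ℝ), (0 : ℝ)))
  have hsymm : IsSymmSndFDerivAt ℝ (uncurry f) (R, θ) :=
    hf.contDiffAt.isSymmSndFDerivAt (by simp)
  calc derivFst (derivSnd f) R θ
      = deriv (fun r => fderiv ℝ (uncurry f) (r, θ) (0, 1)) R := by
        simp only [derivFst, derivSnd_eq_fderiv (hd _)]
    _ = deriv (fun t => fderiv ℝ (uncurry f) (R, t) (1, 0)) θ := by
        rw [hR.deriv, hθ.deriv, hsymm]
    _ = derivSnd (derivFst f) R θ := by
        rw [derivSnd]
        congr 1 with t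
        exact (derivFst_eq_fderiv (hd _)).symm

theorem periodic_derivFst {c : ℝ} (hf : ∀ R, Periodic (f R) c) (R : ℝ) :
    Periodic (derivFst f R) c := fun θ => by
  simp only [derivFst, hf _ θ]

theorem periodic_derivSnd {c : ℝ} (hf : ∀ R, Periodic (f R) c) (R : ℝ) :
    Periodic (derivSnd f R) c := fun θ => by
  rw [derivSnd, derivSnd, ← deriv_comp_add_const, (hf R).funext]

end PartialDerivatives

section IntervalIntegral

variable {E : Type*} [NormedAddCommGroup E] [NormedSpace ℝ E]

theorem Function.Periodic.intervalIntegral_deriv_eq_zero [CompleteSpace E] {g : ℝ → E} {c : ℝ}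
    (hg : Periodic g c) (hd : Differentiable ℝ g)
    (hint : IntervalIntegrable (deriv g) volume 0 c) :
    ∫ θ in (0 : ℝ)..c, deriv g θ = 0 := by
  rw [integral_deriv_eq_sub (fun x _ => hd x) hint, sub_eq_zero]
  simpa using hg 0

theorem hasDerivAt_intervalIntegral_of_contDiff {F : ℝ → ℝ → E}
    (hF : ContDiff ℝ 1 (uncurry F)) (a b R : ℝ) :
    HasDerivAt (fun r => ∫ θ in a..b, F r θ) (∫ θ in a..b, derivFst F R θ) R := by
  have hF' : Continuous (uncurry (derivFst F)) :=
    (hF.uncurry_derivFst (m := 0) (by norm_num)).continuous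
  obtain ⟨C, hC⟩ := ((isCompact_closedBall R 1).prod isCompact_uIcc)
    |>.exists_bound_of_continuousOn (s := Metric.closedBall R 1 ×ˢ Set.uIcc a b) hF'.continuousOn
  refine (hasDerivAt_integral_of_dominated_loc_of_deriv_le (bound := fun _ => C)
    (Metric.ball_mem_nhds R one_pos)
    (Filter.Eventually.of_forall fun r => (hF.continuous.uncurry_left r).aestronglyMeasurable)
    ((hF.continuous.uncurry_left R).intervalIntegrable _ _)
    (hF'.uncurry_left R).aestronglyMeasurable
    (ae_of_all _ fun θ hθ r hr => hC (r, θ) ⟨Metric.ball_subset_closedBall hr,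
      Set.uIoc_subset_uIcc hθ⟩)
    intervalIntegrable_const
    (ae_of_all _ fun θ _ r _ => ?_)).2
  exact hasDerivAt_derivFst (hF.differentiable one_ne_zero _)

end IntervalIntegral

section Energy

variable {U a : ℝ → ℝ → ℝ} {R θ : ℝ} {n m : WithTop ℕ∞}

noncomputable def energyDensity (U a : ℝ → ℝ → ℝ) (R θ : ℝ) : ℝ :=
  (a R θ)⁻¹ * derivFst U R θ ^ 2 + a R θ * derivSnd U R θ ^ 2

noncomputable def energyFlux (U a : ℝ → ℝ → ℝ) (R θ : ℝ) : ℝ :=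
  2 * a R θ * derivFst U R θ * derivSnd U R θ

theorem energyDensity_nonneg (ha : 0 ≤ a R θ) : 0 ≤ energyDensity U a R θ := by
  unfold energyDensity; positivity

theorem contDiff_energyDensity (hU : ContDiff ℝ n (uncurry U)) (ha : ContDiff ℝ m (uncurry a))
    (hmn : m + 1 ≤ n) (ha0 : ∀ R θ, a R θ ≠ 0) :
    ContDiff ℝ m (uncurry (energyDensity U a)) :=
  ((ha.inv fun p => ha0 p.1 p.2).mul ((hU.uncurry_derivFst hmn).pow 2)).add
    (ha.mul ((hU.uncurry_derivSnd hmn).pow 2))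

theorem contDiff_energyFlux (hU : ContDiff ℝ n (uncurry U)) (ha : ContDiff ℝ m (uncurry a))
    (hmn : m + 1 ≤ n) : ContDiff ℝ m (uncurry (energyFlux U a)) :=
  ((contDiff_const.mul ha).mul (hU.uncurry_derivFst hmn)).mul (hU.uncurry_derivSnd hmn)

theorem derivFst_energyDensity (hU : ContDiff ℝ 2 (uncurry U)) (ha : ContDiff ℝ 1 (uncurry a))
    (ha0 : a R θ ≠ 0) (hR : R ≠ 0)
    (hwave : derivFst (fun r θ => r * (a r θ)⁻¹ * derivFst U r θ) R θ
      = derivSnd (fun r θ => r * a r θ * derivSnd U r θ) R θ) :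
    derivFst (energyDensity U a) R θ
      = derivFst a R θ / a R θ * energyDensity U a R θ
        - 2 / R * ((a R θ)⁻¹ * derivFst U R θ ^ 2) + derivSnd (energyFlux U a) R θ := by
  have ha' : DifferentiableAt ℝ (uncurry a) (R, θ) := ha.differentiable one_ne_zero _
  have hUR : DifferentiableAt ℝ (uncurry (derivFst U)) (R, θ) :=
    (hU.uncurry_derivFst (m := 1) (by norm_num)).differentiable one_ne_zero _
  have hUθ : DifferentiableAt ℝ (uncurry (derivSnd U)) (R, θ) :=
    (hU.uncurry_derivSnd (m := 1) (by norm_num)).differentiable one_ne_zero _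
  have hE := (((hasDerivAt_derivFst ha').fun_inv ha0).fun_mul
    ((hasDerivAt_derivFst hUR).fun_pow 2)).fun_add
      ((hasDerivAt_derivFst ha').fun_mul ((hasDerivAt_derivFst hUθ).fun_pow 2))
  have hflux := (((hasDerivAt_derivSnd ha').const_mul 2).fun_mul
    (hasDerivAt_derivSnd hUR)).fun_mul (hasDerivAt_derivSnd hUθ)
  have hwaveR := ((hasDerivAt_id' R).fun_mul ((hasDerivAt_derivFst ha').fun_inv ha0)).fun_mul
    (hasDerivAt_derivFst hUR)
  have hwaveθ := ((hasDerivAt_const θ R).fun_mul (hasDerivAt_derivSnd ha')).fun_mul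
    (hasDerivAt_derivSnd hUθ)
  rw [derivFst, derivSnd, hwaveR.deriv, hwaveθ.deriv] at hwave
  rw [derivFst, derivSnd]
  unfold energyDensity energyFlux
  rw [hE.deriv, hflux.deriv, congrFun₂ (derivFst_derivSnd_comm hU) R θ]
  field_simp at hwave ⊢
  norm_num
  linear_combination 2 * derivFst U R θ * hwave

theorem integral_derivFst_energyDensity {c : ℝ} (hU : ContDiff ℝ 2 (uncurry U))
    (ha : ContDiff ℝ 1 (uncurry a)) (ha0 : ∀ R θ, a R θ ≠ 0) (hR : R ≠ 0)
    (hUper : ∀ R, Periodic (U R) c) (haper : ∀ R, Periodic (a R) c)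
    (hwave : ∀ θ, derivFst (fun r θ => r * (a r θ)⁻¹ * derivFst U r θ) R θ
      = derivSnd (fun r θ => r * a r θ * derivSnd U r θ) R θ) :
    ∫ θ in (0 : ℝ)..c, derivFst (energyDensity U a) R θ
      = (∫ θ in (0 : ℝ)..c, derivFst a R θ / a R θ * energyDensity U a R θ)
        - 2 / R * ∫ θ in (0 : ℝ)..c, (a R θ)⁻¹ * derivFst U R θ ^ 2 := by
  have hflux : ContDiff ℝ 1 (uncurry (energyFlux U a)) := contDiff_energyFlux hU ha (by norm_num)
  have hflux_per : Periodic (energyFlux U a R) c := fun θ => by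
    simp only [energyFlux, haper R θ, periodic_derivFst hUper R θ, periodic_derivSnd hUper R θ]
  have ha_cont : Continuous (a R) := ha.continuous.uncurry_left R
  have haR_cont : Continuous (derivFst a R) :=
    (ha.uncurry_derivFst (m := 0) (by norm_num)).continuous.uncurry_left R
  have hUR_cont : Continuous (derivFst U R) :=
    (hU.uncurry_derivFst (m := 0) (by norm_num)).continuous.uncurry_left R
  have hE_cont : Continuous (energyDensity U a R) :=
    (contDiff_energyDensity hU ha (by norm_num) ha0).continuous.uncurry_left R
  have hdamping_cont : Continuous fun θ => derivFst a R θ / a R θ * energyDensity U a R θ :=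
    (haR_cont.div ha_cont (ha0 R)).mul hE_cont
  have hkinetic_cont : Continuous fun θ => 2 / R * ((a R θ)⁻¹ * derivFst U R θ ^ 2) :=
    continuous_const.mul ((ha_cont.inv₀ (ha0 R)).mul (hUR_cont.pow 2))
  have hdissipation_int : IntervalIntegrable
      (fun θ => derivFst a R θ / a R θ * energyDensity U a R θ
        - 2 / R * ((a R θ)⁻¹ * derivFst U R θ ^ 2)) volume 0 c :=
    (hdamping_cont.sub hkinetic_cont).intervalIntegrable _ _
  have hflux'_cont : Continuous (derivSnd (energyFlux U a) R) :=
    (hflux.uncurry_derivSnd (m := 0) (by norm_num)).continuous.uncurry_left R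
  have hflux_zero : ∫ θ in (0 : ℝ)..c, derivSnd (energyFlux U a) R θ = 0 :=
    hflux_per.intervalIntegral_deriv_eq_zero
      (fun θ => (hasDerivAt_derivSnd (hflux.differentiable one_ne_zero _)).differentiableAt)
      (hflux'_cont.intervalIntegrable _ _)
  calc ∫ θ in (0 : ℝ)..c, derivFst (energyDensity U a) R θ
      = ∫ θ in (0 : ℝ)..c, (derivFst a R θ / a R θ * energyDensity U a R θ
          - 2 / R * ((a R θ)⁻¹ * derivFst U R θ ^ 2) + derivSnd (energyFlux U a) R θ) :=
        integral_congr fun θ _ => derivFst_energyDensity hU ha (ha0 R θ) hR (hwave θ)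
    _ = _ := by
        rw [integral_add hdissipation_int (hflux'_cont.intervalIntegrable _ _), hflux_zero,
          add_zero, integral_sub (hdamping_cont.intervalIntegrable _ _)
            (hkinetic_cont.intervalIntegrable _ _), intervalIntegral.integral_const_mul]

theorem energy_dissipation_nonpos {c K : ℝ} {w : ℝ → ℝ} (hc : 0 ≤ c) (hR : 0 < R)
    (ha : ∀ θ, 0 < a R θ) (hw : ∀ θ, 0 ≤ w θ) :
    -(K ^ 2 / (2 * R ^ 3)) * (∫ θ in (0 : ℝ)..c, energyDensity U a R θ * w θ)
      - 2 / R * ∫ θ in (0 : ℝ)..c, (a R θ)⁻¹ * derivFst U R θ ^ 2 ≤ 0 := by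
  have hdamped : 0 ≤ ∫ θ in (0 : ℝ)..c, energyDensity U a R θ * w θ :=
    integral_nonneg hc fun θ _ => mul_nonneg (energyDensity_nonneg (ha θ).le) (hw θ)
  have hkinetic : 0 ≤ ∫ θ in (0 : ℝ)..c, (a R θ)⁻¹ * derivFst U R θ ^ 2 :=
    integral_nonneg hc fun θ _ => by have := ha θ; positivity
  nlinarith [mul_nonneg (by positivity : 0 ≤ K ^ 2 / (2 * R ^ 3)) hdamped,
    mul_nonneg (by positivity : 0 ≤ 2 / R) hkinetic]

end Energy

theorem energy_identity_general
    (K R₀ : ℝ) (hR₀ : 0 < R₀)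
    (U a η : ℝ → ℝ → ℝ)
    (hU : ContDiff ℝ (⊤ : ℕ∞) (fun p : ℝ × ℝ => U p.1 p.2))
    (ha : ContDiff ℝ (⊤ : ℕ∞) (fun p : ℝ × ℝ => a p.1 p.2))
    (hapos : ∀ R θ, 0 < a R θ)
    (hUper : ∀ R, Function.Periodic (U R) (2 * π))
    (haper : ∀ R, Function.Periodic (a R) (2 * π))
    (hwave : ∀ R ∈ Set.Ici R₀, ∀ θ,
      deriv (fun r => r * (a r θ)⁻¹ * deriv (fun r' => U r' θ) r) R
        = deriv (fun t => R * a R t * deriv (U R) t) θ)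
    (haeq : ∀ R ∈ Set.Ici R₀, ∀ θ,
      deriv (fun r => 2 * Real.log (a r θ)) R = -(K ^ 2 / R ^ 3) * Real.exp (2 * η R θ))
    (E : ℝ → ℝ → ℝ)
    (hE : ∀ R θ, E R θ
      = (a R θ)⁻¹ * (deriv (fun r => U r θ) R) ^ 2 + a R θ * (deriv (U R) θ) ^ 2)
    (𝓔 : ℝ → ℝ) (h𝓔 : ∀ R, 𝓔 R = ∫ θ in (0:ℝ)..(2 * π), E R θ) :
    (∀ R ∈ Set.Ici R₀,
      deriv 𝓔 R
        = -(K ^ 2 / (2 * R ^ 3)) * (∫ θ in (0:ℝ)..(2 * π), E R θ * Real.exp (2 * η R θ))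
          - (2 / R) * ∫ θ in (0:ℝ)..(2 * π), (a R θ)⁻¹ * (deriv (fun r => U r θ) R) ^ 2)
    ∧ AntitoneOn 𝓔 (Set.Ici R₀) := by
  obtain rfl : E = energyDensity U a := funext fun R => funext (hE R)
  have hU2 : ContDiff ℝ 2 (uncurry U) := hU.of_le (WithTop.coe_le_coe.2 le_top)
  have ha1 : ContDiff ℝ 1 (uncurry a) := ha.of_le (WithTop.coe_le_coe.2 le_top)
  have ha0 (R θ : ℝ) : a R θ ≠ 0 := (hapos R θ).ne'
  have hderiv (R : ℝ) :
      HasDerivAt 𝓔 (∫ θ in (0 : ℝ)..(2 * π), derivFst (energyDensity U a) R θ) R := by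
    rw [funext h𝓔]
    exact hasDerivAt_intervalIntegral_of_contDiff
      (contDiff_energyDensity hU2 ha1 (by norm_num) ha0) _ _ R
  have hformula : ∀ R ∈ Set.Ici R₀, deriv 𝓔 R
      = -(K ^ 2 / (2 * R ^ 3))
          * (∫ θ in (0 : ℝ)..(2 * π), energyDensity U a R θ * exp (2 * η R θ))
        - 2 / R * ∫ θ in (0 : ℝ)..(2 * π), (a R θ)⁻¹ * derivFst U R θ ^ 2 := by
    intro R hR
    rw [(hderiv R).deriv, integral_derivFst_energyDensity hU2 ha1 ha0 (hR₀.trans_le hR).ne'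
      hUper haper (hwave R hR),
      ← intervalIntegral.integral_const_mul (-(K ^ 2 / (2 * R ^ 3)))]
    refine congrArg (· - _) (integral_congr fun θ _ => ?_)
    have hlog := ((hasDerivAt_derivFst (ha1.differentiable one_ne_zero _)).log
      (ha0 R θ)).const_mul 2
    linear_combination energyDensity U a R θ / 2 * hlog.deriv.symm.trans (haeq R hR θ)
  refine ⟨hformula, antitoneOn_of_deriv_nonpos (convex_Ici R₀)
    (HasDerivAt.continuousOn fun R _ => hderiv R)
    (fun R _ => (hderiv R).differentiableAt.differentiableWithinAt) fun R hR => ?_⟩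
  rw [hformula R (interior_subset hR)]
  exact energy_dissipation_nonpos (by positivity) (hR₀.trans_le (interior_subset hR))
    (hapos R) fun θ => (exp_pos _).le

/-- Energy identity for the polarized `T²`-symmetric equations: with
`E = a⁻¹U_R² + aU_θ²` and `𝓔(R) = ∫_{S¹} E dθ`, one has
`d𝓔/dR = −(K²/(2R³)) ∫ E e^{2η} − (2/R) ∫ a⁻¹ U_R²`; in particular `𝓔` is
non-increasing. -/
theorem energy_identity
    (K R₀ : ℝ) (hR₀ : 0 < R₀)
    (U a η : ℝ → ℝ → ℝ)
    (hU : ContDiff ℝ (⊤ : ℕ∞) (fun p : ℝ × ℝ => U p.1 p.2))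
    (ha : ContDiff ℝ (⊤ : ℕ∞) (fun p : ℝ × ℝ => a p.1 p.2))
    (hη : ContDiff ℝ (⊤ : ℕ∞) (fun p : ℝ × ℝ => η p.1 p.2))
    (hapos : ∀ R θ, 0 < a R θ)
    (hUper : ∀ R, Function.Periodic (U R) (2 * π))
    (haper : ∀ R, Function.Periodic (a R) (2 * π))
    (hηper : ∀ R, Function.Periodic (η R) (2 * π))
    (hwave : ∀ R ∈ Set.Ici R₀, ∀ θ,
      deriv (fun r => r * (a r θ)⁻¹ * deriv (fun r' => U r' θ) r) R
        = deriv (fun t => R * a R t * deriv (U R) t) θ)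
    (haeq : ∀ R ∈ Set.Ici R₀, ∀ θ,
      deriv (fun r => 2 * Real.log (a r θ)) R = -(K ^ 2 / R ^ 3) * Real.exp (2 * η R θ))
    (E : ℝ → ℝ → ℝ)
    (hE : ∀ R θ, E R θ
      = (a R θ)⁻¹ * (deriv (fun r => U r θ) R) ^ 2 + a R θ * (deriv (U R) θ) ^ 2)
    (𝓔 : ℝ → ℝ) (h𝓔 : ∀ R, 𝓔 R = ∫ θ in (0:ℝ)..(2 * π), E R θ) :
    (∀ R ∈ Set.Ici R₀,
      deriv 𝓔 R
        = -(K ^ 2 / (2 * R ^ 3)) * (∫ θ in (0:ℝ)..(2 * π), E R θ * Real.exp (2 * η R θ))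
          - (2 / R) * ∫ θ in (0:ℝ)..(2 * π), (a R θ)⁻¹ * (deriv (fun r => U r θ) R) ^ 2)
    ∧ AntitoneOn 𝓔 (Set.Ici R₀) :=
  energy_identity_general K R₀ hR₀ U a η hU ha hapos hUper haper hwave haeq E hE 𝓔 h𝓔
end

section
/- Define the correction 𝓖^U(R) = (1/R) ∫_{S¹} (U − ⟨U⟩) U_R a^{-1} dθ, where ⟨U⟩ = P^{-1} ∫_{S¹} U a^{-1} dθ and P = ∫_{S¹} a^{-1} dθ. Then |𝓖^U(R)| ≤ (P(R)/(4πR)) 𝓔(R), where 𝓔(R) = ∫_{S¹} (a^{-1} U_R² + a U_θ²) dθ. -/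
/-!
Reparametrize the circle by `ϑ = ∫₀^θ a⁻¹`, a coordinate of total length `P`. In it the weighted
norms `∫ (U - ⟨U⟩)² a⁻¹` and `∫ a U_θ²` become the plain `L²` norms of `U - ⟨U⟩` and of its
derivative, and `U - ⟨U⟩` has mean zero, so Wirtinger's inequality on a period of length `P`
(a consequence of Parseval's identity) gives `∫ (U - ⟨U⟩)² a⁻¹ ≤ (P/2π)² ∫ a U_θ²`.
Young's inequality `|xy| ≤ x²/(2t) + t y²/2` with `t = P/2π` then bounds the integral in `𝓖`
by `(P/4π) (∫ a⁻¹ U_R² + ∫ a U_θ²)`.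
-/

open Real MeasureTheory intervalIntegral Set

lemma ContinuousOn.memLp_two_restrict_Ioc {a b : ℝ} {f : ℝ → ℂ} (hf : ContinuousOn f (Icc a b)) :
    MemLp f 2 (volume.restrict (Ioc a b)) :=
  (memLp_two_iff_integrable_sq_norm
    ((hf.mono Ioc_subset_Icc_self).aestronglyMeasurable measurableSet_Ioc)).2
    ((hf.norm.pow 2).integrableOn_Icc.mono_set Ioc_subset_Icc_self)

lemma norm_fourierCoeffOn_le_of_hasDerivAt {a b : ℝ} (hab : a < b) {f f' : ℝ → ℂ}
    (hf : ∀ x ∈ Icc a b, HasDerivAt f (f' x) x) (hf' : IntervalIntegrable f' volume a b)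
    (hfab : f a = f b) (hmean : ∫ x in a..b, f x = 0) (n : ℤ) :
    ‖fourierCoeffOn hab f n‖ ≤ (b - a) / (2 * π) * ‖fourierCoeffOn hab f' n‖ := by
  rcases eq_or_ne n 0 with rfl | hn
  · have : fourierCoeffOn hab f 0 = 0 := by
      simp [fourierCoeffOn_eq_integral, hmean]
    rw [this, norm_zero]
    have : 0 < b - a := sub_pos.2 hab
    positivity
  · rw [fourierCoeffOn_of_hasDerivAt hab hn (by rwa [uIcc_of_le hab.le]) hf', hfab, sub_self,
      mul_zero, zero_sub, norm_mul, norm_neg, norm_mul, one_div, norm_inv]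
    have h1 : (1 : ℝ) ≤ |(n : ℝ)| := by exact_mod_cast Int.one_le_abs hn
    have hba : ‖((b : ℂ) - a)‖ = b - a := by
      rw [← Complex.ofReal_sub, Complex.norm_real, Real.norm_of_nonneg (sub_pos.2 hab).le]
    simp only [norm_mul, norm_neg, Complex.norm_ofNat, Complex.norm_real, Complex.norm_I,
      Complex.norm_intCast, Real.norm_eq_abs, abs_of_pos pi_pos, hba]
    have hd : 0 ≤ (b - a) / (2 * π) * ‖fourierCoeffOn hab f' n‖ :=
      mul_nonneg (div_nonneg (sub_pos.2 hab).le two_pi_pos.le) (norm_nonneg _)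
    calc _ = (b - a) / (2 * π) * ‖fourierCoeffOn hab f' n‖ / |(n : ℝ)| := by
          field_simp
      _ ≤ _ := div_le_self hd h1

theorem wirtinger_inequality {a b : ℝ} (hab : a < b) {f f' : ℝ → ℂ}
    (hf : ∀ x ∈ Icc a b, HasDerivAt f (f' x) x) (hf' : ContinuousOn f' (Icc a b))
    (hfab : f a = f b) (hmean : ∫ x in a..b, f x = 0) :
    ∫ x in a..b, ‖f x‖ ^ 2 ≤ ((b - a) / (2 * π)) ^ 2 * ∫ x in a..b, ‖f' x‖ ^ 2 := by
  have hf_cont : ContinuousOn f (Icc a b) := fun x hx => (hf x hx).continuousAt.continuousWithinAt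
  have hparseval := hasSum_le
    (fun n => pow_le_pow_left₀ (norm_nonneg _)
      (norm_fourierCoeffOn_le_of_hasDerivAt hab hf
        (hf'.intervalIntegrable_of_Icc hab.le) hfab hmean n) 2)
    (hasSum_sq_fourierCoeffOn hab hf_cont.memLp_two_restrict_Ioc)
    (by simpa only [mul_pow] using
      (hasSum_sq_fourierCoeffOn hab hf'.memLp_two_restrict_Ioc).mul_left (((b - a) / (2 * π)) ^ 2))
  have hba : 0 < b - a := sub_pos.2 hab
  rwa [smul_eq_mul, smul_eq_mul, mul_left_comm, mul_le_mul_iff_right₀ (inv_pos.2 hba)] at hparseval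

theorem wirtinger_inequality_real {a b : ℝ} (hab : a < b) {g g' : ℝ → ℝ}
    (hg : ∀ x ∈ Icc a b, HasDerivAt g (g' x) x) (hg' : ContinuousOn g' (Icc a b))
    (hgab : g a = g b) (hmean : ∫ x in a..b, g x = 0) :
    ∫ x in a..b, g x ^ 2 ≤ ((b - a) / (2 * π)) ^ 2 * ∫ x in a..b, g' x ^ 2 := by
  simpa only [Complex.norm_real, Real.norm_eq_abs, sq_abs] using
    wirtinger_inequality hab (f := fun x => (g x : ℂ)) (f' := fun x => (g' x : ℂ))
      (fun x hx => (hg x hx).ofReal_comp) (Complex.continuous_ofReal.comp_continuousOn hg')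
      (by rw [hgab]) (by rw [intervalIntegral.integral_ofReal, hmean, Complex.ofReal_zero])

section Reparametrization

variable {w : ℝ → ℝ} {T : ℝ}

lemma strictMono_primitive (hw : Continuous w) (hpos : ∀ x, 0 < w x) :
    StrictMono fun θ => ∫ t in 0..θ, w t :=
  strictMono_of_hasDerivAt_pos (fun θ => (hw.integral_hasStrictDerivAt 0 θ).hasDerivAt) hpos

lemma Function.Periodic.surjective_primitive (hper : Function.Periodic w T) (hT : 0 < T)
    (hw : Continuous w) (hpos : ∀ x, 0 < w x) :
    Function.Surjective fun θ => ∫ t in 0..θ, w t :=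
  (continuous_primitive (fun a b => hw.intervalIntegrable a b) 0).surjective
    (hper.tendsto_atTop_intervalIntegral_of_pos' (hw.intervalIntegrable 0 T) hpos hT)
    (hper.tendsto_atBot_intervalIntegral_of_pos' (hw.intervalIntegrable 0 T) hpos hT)

noncomputable def primitiveOrderIso (hw : Continuous w) (hpos : ∀ x, 0 < w x)
    (hper : Function.Periodic w T) (hT : 0 < T) : ℝ ≃o ℝ :=
  StrictMono.orderIsoOfSurjective _ (strictMono_primitive hw hpos)
    (hper.surjective_primitive hT hw hpos)

variable (hw : Continuous w) (hpos : ∀ x, 0 < w x) (hper : Function.Periodic w T) (hT : 0 < T)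

lemma primitiveOrderIso_apply (θ : ℝ) :
    primitiveOrderIso hw hpos hper hT θ = ∫ t in 0..θ, w t := rfl

lemma hasDerivAt_primitiveOrderIso_symm (s : ℝ) :
    HasDerivAt (primitiveOrderIso hw hpos hper hT).symm
      (w ((primitiveOrderIso hw hpos hper hT).symm s))⁻¹ s :=
  HasDerivAt.of_local_left_inverse (primitiveOrderIso hw hpos hper hT).symm.continuous.continuousAt
    (hw.integral_hasStrictDerivAt 0 _).hasDerivAt (hpos _).ne'
    (.of_forall (primitiveOrderIso hw hpos hper hT).apply_symm_apply)

lemma integral_comp_primitiveOrderIso_symm {F : ℝ → ℝ} (hF : Continuous F) :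
    ∫ s in 0..∫ t in 0..T, w t, F ((primitiveOrderIso hw hpos hper hT).symm s) =
      ∫ θ in 0..T, F θ * w θ := by
  set E := primitiveOrderIso hw hpos hper hT
  have hcov := integral_comp_mul_deriv (f := E) (g := F ∘ E.symm) (a := 0) (b := T)
    (fun θ _ => (hw.integral_hasStrictDerivAt 0 θ).hasDerivAt) hw.continuousOn
    (hF.comp E.symm.continuous)
  simp only [Function.comp_apply, E.symm_apply_apply] at hcov
  rwa [primitiveOrderIso_apply, primitiveOrderIso_apply, integral_same, eq_comm] at hcov

end Reparametrization

theorem weighted_wirtinger_inequality {w : ℝ → ℝ} {T : ℝ} (hw : Continuous w)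
    (hpos : ∀ x, 0 < w x) (hper : Function.Periodic w T) (hT : 0 < T) {V V' : ℝ → ℝ}
    (hV : ∀ θ, HasDerivAt V (V' θ) θ) (hV' : Continuous V') (hVT : V 0 = V T)
    (hmean : ∫ θ in 0..T, V θ * w θ = 0) :
    ∫ θ in 0..T, V θ ^ 2 * w θ ≤
      ((∫ θ in 0..T, w θ) / (2 * π)) ^ 2 * ∫ θ in 0..T, V' θ ^ 2 / w θ := by
  set E := primitiveOrderIso hw hpos hper hT
  have hcov {F : ℝ → ℝ} (hF : Continuous F) :=
    integral_comp_primitiveOrderIso_symm hw hpos hper hT hF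
  have hP : 0 < ∫ θ in 0..T, w θ := intervalIntegral_pos_of_pos (hw.intervalIntegrable 0 T) hpos hT
  have hE0 : E.symm 0 = 0 := E.symm_apply_eq.2 integral_same.symm
  have hET : E.symm (∫ θ in 0..T, w θ) = T := E.symm_apply_eq.2 rfl
  have hVc : Continuous V := continuous_iff_continuousAt.2 fun θ => (hV θ).continuousAt
  have hW := wirtinger_inequality_real hP (g := V ∘ E.symm)
    (g' := fun s => V' (E.symm s) / w (E.symm s))
    (fun s _ => by
      simpa only [div_eq_mul_inv] using
        (hV _).comp s (hasDerivAt_primitiveOrderIso_symm hw hpos hper hT s))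
    ((hV'.comp E.symm.continuous).div (hw.comp E.symm.continuous)
      fun _ => (hpos _).ne').continuousOn
    (by simp only [Function.comp_apply, hE0, hET, hVT])
    (by simpa only [Function.comp_apply] using (hcov hVc).trans hmean)
  simp only [Function.comp_apply, sub_zero] at hW
  have hsq := hcov (F := fun θ => V θ ^ 2) (hVc.pow 2)
  have hsq' := hcov (F := fun θ => (V' θ / w θ) ^ 2) ((hV'.div hw fun θ => (hpos θ).ne').pow 2)
  beta_reduce at hsq hsq'
  rw [hsq, hsq'] at hW
  convert hW using 3
  funext θ
  field_simp [(hpos θ).ne']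

lemma abs_mul_le_sq_div_add_mul_sq {t : ℝ} (ht : 0 < t) (x y : ℝ) :
    |x * y| ≤ x ^ 2 / (2 * t) + t / 2 * y ^ 2 := by
  have h := two_mul_le_add_sq |x| (t * |y|)
  rw [mul_pow, sq_abs, sq_abs] at h
  rw [abs_mul, div_add' _ _ _ (by positivity), le_div_iff₀ (by positivity)]
  linarith

lemma abs_integral_mul_mul_le {a b t : ℝ} (hab : a ≤ b) (ht : 0 < t) {x y w : ℝ → ℝ}
    (hx : Continuous x) (hy : Continuous y) (hw : Continuous w) (hw₀ : ∀ θ, 0 ≤ w θ) :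
    |∫ θ in a..b, x θ * y θ * w θ| ≤
      (∫ θ in a..b, x θ ^ 2 * w θ) / (2 * t) + t / 2 * ∫ θ in a..b, y θ ^ 2 * w θ := by
  calc |∫ θ in a..b, x θ * y θ * w θ|
      ≤ ∫ θ in a..b, |x θ * y θ * w θ| := abs_integral_le_integral_abs hab
    _ ≤ ∫ θ in a..b, ((x θ ^ 2 * w θ) / (2 * t) + t / 2 * (y θ ^ 2 * w θ)) := by
      refine integral_mono_on hab (Continuous.intervalIntegrable (by fun_prop) _ _)
        (Continuous.intervalIntegrable (by fun_prop) _ _) fun θ _ => ?_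
      rw [abs_mul, abs_of_nonneg (hw₀ θ)]
      calc |x θ * y θ| * w θ ≤ (x θ ^ 2 / (2 * t) + t / 2 * y θ ^ 2) * w θ :=
            mul_le_mul_of_nonneg_right (abs_mul_le_sq_div_add_mul_sq ht _ _) (hw₀ θ)
        _ = _ := by ring
    _ = _ := by
      rw [intervalIntegral.integral_add (Continuous.intervalIntegrable (by fun_prop) _ _)
        (Continuous.intervalIntegrable (by fun_prop) _ _), intervalIntegral.integral_div,
        intervalIntegral.integral_const_mul]

theorem abs_integral_sub_mean_mul_le {a : ℝ → ℝ} {T P : ℝ} (ha : Continuous a)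
    (hpos : ∀ θ, 0 < a θ) (hper : Function.Periodic a T) (hT : 0 < T)
    (hP : P = ∫ θ in 0..T, (a θ)⁻¹) {f f' u : ℝ → ℝ} (hf : ∀ θ, HasDerivAt f (f' θ) θ)
    (hf' : Continuous f') (hfT : f 0 = f T) (hu : Continuous u) :
    |∫ θ in 0..T, (f θ - P⁻¹ * ∫ θ' in 0..T, f θ' * (a θ')⁻¹) * u θ * (a θ)⁻¹| ≤
      P / (4 * π) * ∫ θ in 0..T, ((a θ)⁻¹ * u θ ^ 2 + a θ * f' θ ^ 2) := by
  have hw : Continuous fun θ => (a θ)⁻¹ := ha.inv₀ fun θ => (hpos θ).ne'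
  have hwpos : ∀ θ, 0 < (a θ)⁻¹ := fun θ => inv_pos.2 (hpos θ)
  have hP₀ : 0 < P := hP ▸ intervalIntegral_pos_of_pos (hw.intervalIntegrable 0 T) hwpos hT
  have hfc : Continuous f := continuous_iff_continuousAt.2 fun θ => (hf θ).continuousAt
  set m := P⁻¹ * ∫ θ' in 0..T, f θ' * (a θ')⁻¹
  have hmean : ∫ θ in 0..T, (f θ - m) * (a θ)⁻¹ = 0 := by
    simp only [sub_mul]
    rw [intervalIntegral.integral_sub (Continuous.intervalIntegrable (by fun_prop) _ _)
      (Continuous.intervalIntegrable (by fun_prop) _ _), intervalIntegral.integral_const_mul, ← hP,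
      mul_comm, ← mul_assoc, mul_inv_cancel₀ hP₀.ne', one_mul, sub_self]
  have hW := weighted_wirtinger_inequality hw hwpos (fun θ => by simp only [hper θ]) hT
    (V := fun θ => f θ - m) (fun θ => (hf θ).sub_const m) hf' (by simp only [hfT]) hmean
  rw [← hP] at hW
  have hY := abs_integral_mul_mul_le hT.le (div_pos hP₀ two_pi_pos) (x := fun θ => f θ - m)
    (hfc.sub continuous_const) hu hw fun θ => (hwpos θ).le
  have hE : ∫ θ in 0..T, ((a θ)⁻¹ * u θ ^ 2 + a θ * f' θ ^ 2) =
      (∫ θ in 0..T, u θ ^ 2 * (a θ)⁻¹) + ∫ θ in 0..T, f' θ ^ 2 / (a θ)⁻¹ := by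
    refine (integral_congr fun θ _ => ?_).trans (intervalIntegral.integral_add
      (((hu.pow 2).mul hw).intervalIntegrable _ _)
      (((hf'.pow 2).div hw fun θ => (hwpos θ).ne').intervalIntegrable _ _))
    simp only [div_inv_eq_mul]
    ring
  rw [hE]
  calc _ ≤ _ := hY
    _ ≤ (P / (2 * π)) ^ 2 * (∫ θ in 0..T, f' θ ^ 2 / (a θ)⁻¹) / (2 * (P / (2 * π))) +
          P / (2 * π) / 2 * ∫ θ in 0..T, u θ ^ 2 * (a θ)⁻¹ := by gcongr
    _ = _ := by field_simp; ring

lemma continuous_deriv_fst_of_contDiff {F : ℝ → ℝ → ℝ}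
    (hF : ContDiff ℝ 1 fun p : ℝ × ℝ => F p.1 p.2) (r : ℝ) :
    Continuous fun θ => deriv (fun r => F r θ) r := by
  have hderiv (θ : ℝ) :
      deriv (fun r => F r θ) r = fderiv ℝ (fun p : ℝ × ℝ => F p.1 p.2) (r, θ) (1, 0) :=
    ((hF.differentiable one_ne_zero (r, θ)).hasFDerivAt.comp_hasDerivAt (f := fun r => (r, θ)) r
      ((hasDerivAt_id r).prodMk (hasDerivAt_const r θ))).deriv
  simp only [hderiv]
  exact ((hF.continuous_fderiv one_ne_zero).comp (Continuous.prodMk_right r)).clm_apply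
    continuous_const

/-- Estimate for the energy correction
`𝓖^U(R) = (1/R) ∫_{S¹} (U − ⟨U⟩) U_R a⁻¹ dθ`, where
`⟨U⟩ = P⁻¹ ∫_{S¹} U a⁻¹ dθ` and `P = ∫_{S¹} a⁻¹ dθ`:
`|𝓖^U(R)| ≤ (P(R)/(4πR)) 𝓔(R)` with `𝓔 = ∫_{S¹} (a⁻¹U_R² + aU_θ²) dθ`. -/
theorem correction_estimate
    (R₀ : ℝ) (hR₀ : 0 < R₀)
    (U a : ℝ → ℝ → ℝ)
    (hU : ContDiff ℝ (⊤ : ℕ∞) (fun p : ℝ × ℝ => U p.1 p.2))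
    (ha : ContDiff ℝ (⊤ : ℕ∞) (fun p : ℝ × ℝ => a p.1 p.2))
    (hapos : ∀ R θ, 0 < a R θ)
    (hUper : ∀ R, Function.Periodic (U R) (2 * π))
    (haper : ∀ R, Function.Periodic (a R) (2 * π))
    (P : ℝ → ℝ) (hPdef : ∀ R, P R = ∫ θ in (0:ℝ)..(2 * π), (a R θ)⁻¹)
    (𝓔 : ℝ → ℝ)
    (h𝓔 : ∀ R, 𝓔 R = ∫ θ in (0:ℝ)..(2 * π),
      ((a R θ)⁻¹ * (deriv (fun r => U r θ) R) ^ 2 + a R θ * (deriv (U R) θ) ^ 2))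
    (𝓖 : ℝ → ℝ)
    (h𝓖 : ∀ R, 𝓖 R = (1 / R) * ∫ θ in (0:ℝ)..(2 * π),
      (U R θ - (P R)⁻¹ * ∫ θ' in (0:ℝ)..(2 * π), U R θ' * (a R θ')⁻¹)
        * deriv (fun r => U r θ) R * (a R θ)⁻¹) :
    ∀ R ∈ Set.Ici R₀, |𝓖 R| ≤ P R / (4 * π * R) * 𝓔 R := by
  intro R hR
  have hR_pos : 0 < R := hR₀.trans_le hR
  have hU₁ : ContDiff ℝ 1 fun p : ℝ × ℝ => U p.1 p.2 := hU.of_le ENat.LEInfty.out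
  have hUR : ContDiff ℝ 1 (U R) := hU₁.comp (contDiff_const.prodMk contDiff_id)
  have haR : Continuous (a R) := ha.continuous.comp (Continuous.prodMk_right R)
  have hslice := abs_integral_sub_mean_mul_le haR (hapos R) (haper R) two_pi_pos (hPdef R)
    (fun θ => (hUR.differentiable one_ne_zero θ).hasDerivAt) (hUR.continuous_deriv le_rfl)
    (by simpa only [zero_add] using (hUper R 0).symm) (continuous_deriv_fst_of_contDiff hU₁ R)
  rw [h𝓖 R, h𝓔 R, abs_mul, abs_of_pos (one_div_pos.2 hR_pos)]
  calc _ ≤ 1 / R * (P R / (4 * π) * _) := mul_le_mul_of_nonneg_left hslice (by positivity)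
    _ = _ := by field_simp
end

section
/- With E = a^{-1} U_R² + a U_θ², 𝓔 = ∫_{S¹} E dθ, P = ∫_{S¹} a^{-1} dθ, P_R = (K²/(2R³)) ∫_{S¹} e^{2η} a^{-1} dθ, and the constraint η_θ = 2 R U_R U_θ, the error term Ω_𝓔 := (P_R/P)𝓔 − (K²/(2R³)) ∫_{S¹} E e^{2η} dθ satisfies |Ω_𝓔| ≤ 𝓔 · (K²/(2R³)) ∫_{S¹} (e^{2η}/a)_R dθ. -/
/-!
The field equations for `a` and `η` give `(e^{2η}/a)_R = 2 R E e^{2η}`, while the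
constraint `η_θ = 2 R U_R U_θ` and AM-GM give `|(e^{2η})_θ| ≤ 2 R E e^{2η}`. Hence the
oscillation of `e^{2η}` on the circle is at most `C = ∫ (e^{2η}/a)_R dθ`, so its
`a⁻¹`-weighted mean, which is `(2R³/K²) P_R / P`, lies within `C` of each of its values.
Writing `Ω_𝓔 = (K²/(2R³)) ∫ E (mean - e^{2η}) dθ` with `E ≥ 0` then gives
`|Ω_𝓔| ≤ (K²/(2R³)) 𝓔 C`.
-/

open Real MeasureTheory intervalIntegral

namespace ContDiff

variable {F : ℝ → ℝ → ℝ} {n : WithTop ℕ∞}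

theorem curry_left (hF : ContDiff ℝ n (fun p : ℝ × ℝ => F p.1 p.2)) (θ : ℝ) :
    ContDiff ℝ n fun r => F r θ :=
  hF.comp (contDiff_prodMk_left θ)

theorem curry_right (hF : ContDiff ℝ n (fun p : ℝ × ℝ => F p.1 p.2)) (R : ℝ) :
    ContDiff ℝ n (F R) :=
  hF.comp (contDiff_prodMk_right R)

theorem continuous_deriv_curry_left (hF : ContDiff ℝ n (fun p : ℝ × ℝ => F p.1 p.2))
    (hn : n ≠ 0) (R : ℝ) : Continuous fun θ => deriv (fun r => F r θ) R := by
  have hderiv : ∀ θ, deriv (fun r => F r θ) R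
      = fderiv ℝ (fun p : ℝ × ℝ => F p.1 p.2) (R, θ) (1, 0) := fun θ => by
    refine HasDerivAt.deriv ?_
    exact (hF.differentiable hn (R, θ)).hasFDerivAt.comp_hasDerivAt R
      ((hasDerivAt_id R).prodMk (hasDerivAt_const R θ))
  simp only [hderiv]
  exact ((ContinuousLinearMap.apply ℝ ℝ ((1, 0) : ℝ × ℝ)).continuous.comp
    (hF.continuous_fderiv hn)).comp (Continuous.prodMk_right R)

end ContDiff

theorem continuous_inv_mul_sq_add_mul_sq {U a : ℝ → ℝ → ℝ}
    (hU : ContDiff ℝ 1 (fun p : ℝ × ℝ => U p.1 p.2))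
    (ha : ContDiff ℝ 1 (fun p : ℝ × ℝ => a p.1 p.2)) (R : ℝ) (hapos : ∀ θ, 0 < a R θ) :
    Continuous fun θ =>
      (a R θ)⁻¹ * (deriv (fun r => U r θ) R) ^ 2 + a R θ * (deriv (U R) θ) ^ 2 :=
  have hacont : Continuous (a R) := (ha.curry_right R).continuous
  ((hacont.inv₀ fun θ => (hapos θ).ne').mul
      ((hU.continuous_deriv_curry_left one_ne_zero R).pow 2)).add
    (hacont.mul (((hU.curry_right R).continuous_deriv le_rfl).pow 2))

theorem two_mul_abs_mul_le {a : ℝ} (ha : 0 < a) (x y : ℝ) :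
    2 * |x * y| ≤ a⁻¹ * x ^ 2 + a * y ^ 2 := by
  have h := two_mul_le_add_sq |x| (a * |y|)
  rw [mul_pow, sq_abs, sq_abs] at h
  rw [abs_mul, show a⁻¹ * x ^ 2 + a * y ^ 2 = (x ^ 2 + a ^ 2 * y ^ 2) / a by field_simp,
    le_div_iff₀ ha]
  linarith

theorem abs_two_mul_two_mul_mul_mul_le {a R : ℝ} (ha : 0 < a) (hR : 0 ≤ R) (x y : ℝ) :
    |2 * (2 * R * x * y)| ≤ 2 * R * (a⁻¹ * x ^ 2 + a * y ^ 2) :=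
  calc |2 * (2 * R * x * y)| = 2 * R * (2 * |x * y|) := by
        simp only [abs_mul, abs_two, abs_of_nonneg hR]; ring
    _ ≤ 2 * R * (a⁻¹ * x ^ 2 + a * y ^ 2) := by gcongr; exact two_mul_abs_mul_le ha x y

theorem deriv_exp_two_mul_div_eq {η a : ℝ → ℝ} {R c e : ℝ}
    (hη : DifferentiableAt ℝ η R) (ha : DifferentiableAt ℝ a R) (ha0 : a R ≠ 0)
    (hlog : deriv (fun r => 2 * log (a r)) R = -c * exp (2 * η R))
    (hη' : deriv η R + c / 4 * exp (2 * η R) = a R * R * e) :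
    deriv (fun r => exp (2 * η r) / a r) R = 2 * R * e * exp (2 * η R) := by
  have ha' : deriv a R = -(c / 2) * exp (2 * η R) * a R := by
    rw [((ha.hasDerivAt.log ha0).const_mul 2).deriv] at hlog
    field_simp at hlog ⊢
    linarith
  refine (((hη.hasDerivAt.const_mul 2).exp.div ha.hasDerivAt ha0).congr_deriv ?_).deriv
  rw [ha', show deriv η R = a R * R * e - c / 4 * exp (2 * η R) by linarith]
  field_simp
  ring

theorem abs_sub_le_integral_of_abs_deriv_le {f f' g : ℝ → ℝ} {a b : ℝ}
    (hf : ∀ u, HasDerivAt f (f' u) u) (hf' : IntervalIntegrable f' volume a b)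
    (hg : IntervalIntegrable g volume a b) (hbound : ∀ u, |f' u| ≤ g u) :
    ∀ s ∈ Set.Icc a b, ∀ t ∈ Set.Icc a b, |f t - f s| ≤ ∫ u in a..b, g u := by
  suffices key : ∀ s t, a ≤ s → s ≤ t → t ≤ b → |f t - f s| ≤ ∫ u in a..b, g u by
    intro s hs t ht
    rcases le_total s t with hst | hts
    · exact key s t hs.1 hst ht.2
    · rw [abs_sub_comm]; exact key t s ht.1 hts hs.2
  intro s t has hst htb
  have hsub : Set.uIcc s t ⊆ Set.uIcc a b := Set.uIcc_subset_uIcc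
    (Set.mem_uIcc_of_le has (hst.trans htb)) (Set.mem_uIcc_of_le (has.trans hst) htb)
  rw [← integral_eq_sub_of_hasDerivAt (fun u _ => hf u) (hf'.mono_set hsub)]
  calc |∫ u in s..t, f' u|
      ≤ ∫ u in s..t, |f' u| := abs_integral_le_integral_abs hst
    _ ≤ ∫ u in s..t, g u :=
        integral_mono_on hst (hf'.mono_set hsub).abs (hg.mono_set hsub) fun u _ => hbound u
    _ ≤ ∫ u in a..b, g u := integral_mono_interval has hst htb
        (Filter.Eventually.of_forall fun u => (abs_nonneg _).trans (hbound u)) hg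

theorem abs_exp_two_mul_sub_le_integral {η g : ℝ → ℝ} {a b : ℝ} (hη : ContDiff ℝ 1 η)
    (hg : IntervalIntegrable g volume a b)
    (hbound : ∀ θ, |2 * deriv η θ * exp (2 * η θ)| ≤ g θ) :
    ∀ s ∈ Set.Icc a b, ∀ t ∈ Set.Icc a b,
      |exp (2 * η t) - exp (2 * η s)| ≤ ∫ θ in a..b, g θ :=
  abs_sub_le_integral_of_abs_deriv_le (f' := fun θ => 2 * deriv η θ * exp (2 * η θ))
    (fun θ => (((hη.differentiable one_ne_zero θ).hasDerivAt.const_mul 2).exp).congr_deriv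
      (by ring))
    (((continuous_const.mul (hη.continuous_deriv le_rfl)).mul
      (continuous_const.mul hη.continuous).rexp).intervalIntegrable a b) hg hbound

theorem abs_integral_mul_div_integral_sub_le {f w : ℝ → ℝ} {a b C : ℝ} (hab : a < b)
    (hf : Continuous f) (hw : Continuous w) (hwpos : ∀ t, 0 < w t)
    (hosc : ∀ s ∈ Set.Icc a b, ∀ t ∈ Set.Icc a b, |f t - f s| ≤ C) :
    ∀ s ∈ Set.Icc a b, |(∫ t in a..b, f t * w t) / (∫ t in a..b, w t) - f s| ≤ C := by
  intro s hs
  have hW : 0 < ∫ t in a..b, w t :=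
    intervalIntegral_pos_of_pos_on (hw.intervalIntegrable a b) (fun t _ => hwpos t) hab
  have hdiff : (∫ t in a..b, f t * w t) - (∫ t in a..b, w t) * f s
      = ∫ t in a..b, (f t - f s) * w t := by
    simp only [sub_mul]
    rw [integral_sub (f := fun t => f t * w t) (g := fun t => f s * w t)
      ((hf.mul hw).intervalIntegrable a b) ((continuous_const.mul hw).intervalIntegrable a b),
      intervalIntegral.integral_const_mul, mul_comm]
  rw [div_sub' hW.ne', abs_div, abs_of_pos hW, div_le_iff₀ hW, hdiff]
  calc |∫ t in a..b, (f t - f s) * w t|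
      ≤ ∫ t in a..b, |(f t - f s) * w t| := abs_integral_le_integral_abs hab.le
    _ ≤ ∫ t in a..b, C * w t :=
        integral_mono_on hab.le (((hf.sub continuous_const).mul hw).abs.intervalIntegrable a b)
          ((continuous_const.mul hw).intervalIntegrable a b) fun t ht => by
            rw [abs_mul, abs_of_pos (hwpos t)]
            exact mul_le_mul_of_nonneg_right (hosc s hs t ht) (hwpos t).le
    _ = C * ∫ t in a..b, w t := intervalIntegral.integral_const_mul C w

theorem abs_average_mul_integral_sub_integral_mul_le {E f w : ℝ → ℝ} {a b C : ℝ}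
    (hab : a < b) (hE : Continuous E) (hf : Continuous f) (hw : Continuous w)
    (hEnn : ∀ t, 0 ≤ E t) (hwpos : ∀ t, 0 < w t)
    (hosc : ∀ s ∈ Set.Icc a b, ∀ t ∈ Set.Icc a b, |f t - f s| ≤ C) :
    |(∫ t in a..b, f t * w t) / (∫ t in a..b, w t) * (∫ t in a..b, E t)
        - ∫ t in a..b, E t * f t| ≤ (∫ t in a..b, E t) * C := by
  set m := (∫ t in a..b, f t * w t) / (∫ t in a..b, w t)
  have hdiff : m * (∫ t in a..b, E t) - ∫ t in a..b, E t * f t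
      = ∫ t in a..b, E t * (m - f t) := by
    simp only [mul_sub]
    rw [integral_sub (f := fun t => E t * m) (g := fun t => E t * f t)
      ((hE.mul continuous_const).intervalIntegrable a b) ((hE.mul hf).intervalIntegrable a b),
      intervalIntegral.integral_mul_const, mul_comm]
  rw [hdiff]
  calc |∫ t in a..b, E t * (m - f t)|
      ≤ ∫ t in a..b, |E t * (m - f t)| := abs_integral_le_integral_abs hab.le
    _ ≤ ∫ t in a..b, E t * C :=
        integral_mono_on hab.le ((hE.mul (continuous_const.sub hf)).abs.intervalIntegrable a b)
          ((hE.mul continuous_const).intervalIntegrable a b) fun t ht => by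
            rw [abs_mul, abs_of_nonneg (hEnn t)]
            exact mul_le_mul_of_nonneg_left
              (abs_integral_mul_div_integral_sub_le hab hf hw hwpos hosc t ht) (hEnn t)
    _ = (∫ t in a..b, E t) * C := intervalIntegral.integral_mul_const C E

theorem error_term_estimate_general
    (K R₀ : ℝ) (hR₀ : 0 < R₀)
    (U a η : ℝ → ℝ → ℝ)
    (hU : ContDiff ℝ (⊤ : ℕ∞) (fun p : ℝ × ℝ => U p.1 p.2))
    (ha : ContDiff ℝ (⊤ : ℕ∞) (fun p : ℝ × ℝ => a p.1 p.2))
    (hη : ContDiff ℝ (⊤ : ℕ∞) (fun p : ℝ × ℝ => η p.1 p.2))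
    (hapos : ∀ R θ, 0 < a R θ)
    (E : ℝ → ℝ → ℝ)
    (hE : ∀ R θ, E R θ
      = (a R θ)⁻¹ * (deriv (fun r => U r θ) R) ^ 2 + a R θ * (deriv (U R) θ) ^ 2)
    (haeq : ∀ R ∈ Set.Ici R₀, ∀ θ,
      deriv (fun r => 2 * Real.log (a r θ)) R = -(K ^ 2 / R ^ 3) * Real.exp (2 * η R θ))
    (hηR : ∀ R ∈ Set.Ici R₀, ∀ θ,
      deriv (fun r => η r θ) R + K ^ 2 / (4 * R ^ 3) * Real.exp (2 * η R θ)
        = a R θ * R * E R θ)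
    (hηθ : ∀ R ∈ Set.Ici R₀, ∀ θ,
      deriv (η R) θ = 2 * R * deriv (fun r => U r θ) R * deriv (U R) θ)
    (P PR 𝓔 Ω : ℝ → ℝ)
    (hPdef : ∀ R, P R = ∫ θ in (0:ℝ)..(2 * π), (a R θ)⁻¹)
    (hPR : ∀ R, PR R
      = K ^ 2 / (2 * R ^ 3) * ∫ θ in (0:ℝ)..(2 * π), Real.exp (2 * η R θ) * (a R θ)⁻¹)
    (h𝓔 : ∀ R, 𝓔 R = ∫ θ in (0:ℝ)..(2 * π), E R θ)
    (hΩ : ∀ R, Ω R = (PR R / P R) * 𝓔 R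
      - K ^ 2 / (2 * R ^ 3) * ∫ θ in (0:ℝ)..(2 * π), E R θ * Real.exp (2 * η R θ)) :
    ∀ R ∈ Set.Ici R₀,
      |Ω R| ≤ 𝓔 R * (K ^ 2 / (2 * R ^ 3)) *
        ∫ θ in (0:ℝ)..(2 * π), deriv (fun r => Real.exp (2 * η r θ) / a r θ) R := by
  intro R hR
  have hRpos : 0 < R := hR₀.trans_le hR
  have h1 : (1 : WithTop ℕ∞) ≤ (⊤ : ℕ∞) := by exact_mod_cast le_top
  have hU1 := hU.of_le h1
  have ha1 := ha.of_le h1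
  have hη1 := hη.of_le h1
  have hEcont : Continuous (E R) := by
    rw [funext (hE R)]; exact continuous_inv_mul_sq_add_mul_sq hU1 ha1 R (hapos R)
  have hEnn : ∀ θ, 0 ≤ E R θ := fun θ => by
    rw [hE R θ]; have := hapos R θ; positivity
  have hradial : ∀ θ, deriv (fun r => exp (2 * η r θ) / a r θ) R
      = 2 * R * E R θ * exp (2 * η R θ) := fun θ =>
    deriv_exp_two_mul_div_eq ((hη1.curry_left θ).differentiable one_ne_zero R)
      ((ha1.curry_left θ).differentiable one_ne_zero R) (hapos R θ).ne' (haeq R hR θ)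
      (by rw [← hηR R hR θ]; ring)
  have hangular : ∀ θ, |2 * deriv (η R) θ * exp (2 * η R θ)|
      ≤ 2 * R * E R θ * exp (2 * η R θ) := fun θ => by
    rw [abs_mul, abs_of_pos (exp_pos _), hηθ R hR θ, hE R θ]
    exact mul_le_mul_of_nonneg_right
      (abs_two_mul_two_mul_mul_mul_le (hapos R θ) hRpos.le _ _) (exp_pos _).le
  have hexp : Continuous fun θ => exp (2 * η R θ) :=
    (continuous_const.mul (hη1.curry_right R).continuous).rexp
  have hosc := abs_exp_two_mul_sub_le_integral (a := 0) (b := 2 * π) (hη1.curry_right R)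
    (((continuous_const.mul hEcont).mul hexp).intervalIntegrable _ _) hangular
  have hc : 0 ≤ K ^ 2 / (2 * R ^ 3) := by positivity
  rw [hΩ, hPR, hPdef, h𝓔, integral_congr fun θ _ => hradial θ, mul_div_assoc, mul_assoc,
    ← mul_sub, abs_mul, abs_of_nonneg hc]
  calc _ ≤ K ^ 2 / (2 * R ^ 3) * ((∫ θ in (0:ℝ)..(2 * π), E R θ) *
        ∫ θ in (0:ℝ)..(2 * π), 2 * R * E R θ * exp (2 * η R θ)) := by
        gcongr
        exact abs_average_mul_integral_sub_integral_mul_le two_pi_pos hEcont hexp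
          ((ha1.curry_right R).continuous.inv₀ fun θ => (hapos R θ).ne') hEnn
          (fun θ => inv_pos.2 (hapos R θ)) hosc
    _ = _ := by ring

/-- Estimate for the error term
`Ω_𝓔 = (P_R/P)𝓔 − (K²/(2R³)) ∫_{S¹} E e^{2η} dθ`, where
`P_R = (K²/(2R³)) ∫_{S¹} e^{2η} a⁻¹ dθ`:
`|Ω_𝓔| ≤ 𝓔 (K²/(2R³)) ∫_{S¹} (e^{2η}/a)_R dθ`. -/
theorem error_term_estimate
    (K R₀ : ℝ) (hR₀ : 0 < R₀)
    (U a η : ℝ → ℝ → ℝ)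
    (hU : ContDiff ℝ (⊤ : ℕ∞) (fun p : ℝ × ℝ => U p.1 p.2))
    (ha : ContDiff ℝ (⊤ : ℕ∞) (fun p : ℝ × ℝ => a p.1 p.2))
    (hη : ContDiff ℝ (⊤ : ℕ∞) (fun p : ℝ × ℝ => η p.1 p.2))
    (hapos : ∀ R θ, 0 < a R θ)
    (hUper : ∀ R, Function.Periodic (U R) (2 * π))
    (haper : ∀ R, Function.Periodic (a R) (2 * π))
    (hηper : ∀ R, Function.Periodic (η R) (2 * π))
    (E : ℝ → ℝ → ℝ)
    (hE : ∀ R θ, E R θ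
      = (a R θ)⁻¹ * (deriv (fun r => U r θ) R) ^ 2 + a R θ * (deriv (U R) θ) ^ 2)
    (haeq : ∀ R ∈ Set.Ici R₀, ∀ θ,
      deriv (fun r => 2 * Real.log (a r θ)) R = -(K ^ 2 / R ^ 3) * Real.exp (2 * η R θ))
    (hηR : ∀ R ∈ Set.Ici R₀, ∀ θ,
      deriv (fun r => η r θ) R + K ^ 2 / (4 * R ^ 3) * Real.exp (2 * η R θ)
        = a R θ * R * E R θ)
    (hηθ : ∀ R ∈ Set.Ici R₀, ∀ θ,
      deriv (η R) θ = 2 * R * deriv (fun r => U r θ) R * deriv (U R) θ)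
    (P PR 𝓔 Ω : ℝ → ℝ)
    (hPdef : ∀ R, P R = ∫ θ in (0:ℝ)..(2 * π), (a R θ)⁻¹)
    (hPR : ∀ R, PR R
      = K ^ 2 / (2 * R ^ 3) * ∫ θ in (0:ℝ)..(2 * π), Real.exp (2 * η R θ) * (a R θ)⁻¹)
    (h𝓔 : ∀ R, 𝓔 R = ∫ θ in (0:ℝ)..(2 * π), E R θ)
    (hΩ : ∀ R, Ω R = (PR R / P R) * 𝓔 R
      - K ^ 2 / (2 * R ^ 3) * ∫ θ in (0:ℝ)..(2 * π), E R θ * Real.exp (2 * η R θ)) :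
    ∀ R ∈ Set.Ici R₀,
      |Ω R| ≤ 𝓔 R * (K ^ 2 / (2 * R ^ 3)) *
        ∫ θ in (0:ℝ)..(2 * π), deriv (fun r => Real.exp (2 * η r θ) / a r θ) R :=
  error_term_estimate_general K R₀ hR₀ U a η hU ha hη hapos E hE haeq hηR hηθ P PR 𝓔 Ω hPdef hPR h𝓔
    hΩ
end

section
/- Let u : [R₀, ∞) → ℝ be continuous and nonnegative with u(R) ≤ C R^{-1/4} ( 1 + ∫_{R₀}^R (R')^{-3/4} u(R')² dR' ) for all R, and suppose u ≤ C ε^{1/2} uniformly with ε sufficiently small (depending on C). Then u(R) ≤ C' R^{-1/4} for some constant C' and all R ≥ R₀. -/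
open Real MeasureTheory intervalIntegral

lemma aux_rpow_contOn {a b c : ℝ} (ha : 0 < a) :
    ContinuousOn (fun r : ℝ => r ^ c) (Set.Icc a b) := fun x hx =>
  (Real.continuousAt_rpow_const x _ (Or.inl (ne_of_gt (lt_of_lt_of_le ha hx.1)))).continuousWithinAt

lemma aux_rpow_intble {a b c : ℝ} (ha : 0 < a) (hab : a ≤ b) :
    IntervalIntegrable (fun r : ℝ => r ^ c) volume a b := by
  have h := (aux_rpow_contOn (b := b) (c := c) ha)
  rw [← Set.uIcc_of_le hab] at h
  exact h.intervalIntegrable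

lemma aux_f_contOn {u : ℝ → ℝ} (hu : Continuous u) {a b : ℝ} (ha : 0 < a) :
    ContinuousOn (fun r : ℝ => r ^ (-(3:ℝ)/4) * u r ^ 2) (Set.Icc a b) :=
  (aux_rpow_contOn ha).mul ((hu.pow 2).continuousOn)

lemma aux_f_intble {u : ℝ → ℝ} (hu : Continuous u) {a b : ℝ} (ha : 0 < a) (hab : a ≤ b) :
    IntervalIntegrable (fun r : ℝ => r ^ (-(3:ℝ)/4) * u r ^ 2) volume a b := by
  have h := aux_f_contOn hu (b := b) ha
  rw [← Set.uIcc_of_le hab] at h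
  exact h.intervalIntegrable

/-- Nonlinear Gronwall bootstrap: if `u ≥ 0` is continuous with
`u(R) ≤ C R^{-1/4}(1 + ∫_{R₀}^R r^{-3/4} u(r)² dr)` and `u ≤ C√ε` uniformly
with `ε` sufficiently small (depending on `C`), then `u(R) ≤ C' R^{-1/4}`. -/
theorem nonlinear_gronwall_bootstrap (C : ℝ) (hC : 0 < C) :
    ∃ ε₀ > 0, ∀ ε : ℝ, 0 < ε → ε ≤ ε₀ →
      ∀ R₀ : ℝ, 0 < R₀ → ∀ u : ℝ → ℝ,
        Continuous u → (∀ R, 0 ≤ u R) →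
        (∀ R ∈ Set.Ici R₀,
          u R ≤ C * R ^ (-(1 : ℝ) / 4) *
            (1 + ∫ r in R₀..R, r ^ (-(3 : ℝ) / 4) * u r ^ 2)) →
        (∀ R ∈ Set.Ici R₀, u R ≤ C * ε ^ ((1 : ℝ) / 2)) →
        ∃ C' > 0, ∀ R ∈ Set.Ici R₀, u R ≤ C' * R ^ (-(1 : ℝ) / 4) := by
  refine ⟨1 / (1024 * C ^ 4), by positivity, ?_⟩
  intro ε hε hε₀ R₀ hR₀ u hu hupos hmain hunif
  set K : ℝ := 64 * C ^ 2 with hKdef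
  have hK : 0 < K := by positivity
  set M : ℝ := K ^ 4 with hMdef
  have hM : 0 < M := by positivity
  have hM14 : M ^ ((1:ℝ)/4) = K := by
    rw [hMdef, ← Real.rpow_natCast K 4, ← Real.rpow_mul hK.le]
    norm_num
  set f : ℝ → ℝ := fun r => r ^ (-(3:ℝ)/4) * u r ^ 2 with hfdef
  set I : ℝ → ℝ := fun R => ∫ r in R₀..R, f r with hIdef
  -- nonnegativity of f on positives
  have hfpos : ∀ r : ℝ, 0 < r → 0 ≤ f r := fun r hr =>
    mul_nonneg (Real.rpow_nonneg hr.le _) (sq_nonneg _)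
  -- monotonicity of I
  have hImono : ∀ a b : ℝ, R₀ ≤ a → a ≤ b → I a ≤ I b := by
    intro a b ha hab
    have hadd := intervalIntegral.integral_add_adjacent_intervals
      (aux_f_intble hu hR₀ ha) (aux_f_intble hu (lt_of_lt_of_le hR₀ ha) hab)
    have hnn : 0 ≤ ∫ r in a..b, f r := by
      apply intervalIntegral.integral_nonneg hab
      intro x hx
      exact hfpos x (lt_of_lt_of_le (lt_of_lt_of_le hR₀ ha) hx.1)
    show (∫ r in R₀..a, f r) ≤ ∫ r in R₀..b, f r
    simp only [hfdef] at hnn ⊢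
    rw [← hadd]
    linarith
  -- the uniform bound on u^2
  have husq : ∀ r : ℝ, r ∈ Set.Ici R₀ → u r ^ 2 ≤ C ^ 2 * ε := by
    intro r hr
    have h1 := hunif r hr
    have h2 : u r ^ 2 ≤ (C * ε ^ ((1:ℝ)/2)) ^ 2 :=
      pow_le_pow_left₀ (hupos r) h1 2
    calc u r ^ 2 ≤ (C * ε ^ ((1:ℝ)/2)) ^ 2 := h2
      _ = C ^ 2 * ((ε ^ ((1:ℝ)/2)) ^ 2) := by ring
      _ = C ^ 2 * ε := by
          rw [← Real.rpow_natCast (ε ^ ((1:ℝ)/2)) 2, ← Real.rpow_mul hε.le]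
          norm_num
  -- Improvement step
  have himprove : ∀ T : ℝ, R₀ ≤ T → (∀ r ∈ Set.Icc R₀ T, I r ≤ 1) → I T ≤ 1/2 := by
    intro T hT h1
    -- pointwise decay bound under hypothesis
    have hu2 : ∀ r ∈ Set.Icc R₀ T, u r ≤ 2 * C * r ^ (-(1:ℝ)/4) := by
      intro r hr
      have := hmain r hr.1
      have hIr := h1 r hr
      have hrpos : (0:ℝ) < r := lt_of_lt_of_le hR₀ hr.1
      have hpow : (0:ℝ) ≤ r ^ (-(1:ℝ)/4) := Real.rpow_nonneg hrpos.le _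
      nlinarith [this, hIr, mul_nonneg hC.le hpow]
    set m : ℝ := max R₀ (min T M) with hmdef
    have hm1 : R₀ ≤ m := le_max_left _ _
    have hm2 : m ≤ T := max_le hT (min_le_left _ _)
    have hmpos : 0 < m := lt_of_lt_of_le hR₀ hm1
    -- split the integral
    have hsplit : I T = I m + ∫ r in m..T, f r :=
      (intervalIntegral.integral_add_adjacent_intervals
        (aux_f_intble hu hR₀ hm1) (aux_f_intble hu hmpos hm2)).symm
    -- piece 1
    have hpiece1 : I m ≤ 1/4 := by
      have hb : I m ≤ ∫ r in R₀..m, (C ^ 2 * ε) * r ^ (-(3:ℝ)/4) := by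
        apply intervalIntegral.integral_mono_on hm1 (aux_f_intble hu hR₀ hm1)
          ((aux_rpow_intble hR₀ hm1).const_mul _)
        intro x hx
        have hx0 : (0:ℝ) < x := lt_of_lt_of_le hR₀ hx.1
        have := husq x hx.1
        calc f x = x ^ (-(3:ℝ)/4) * u x ^ 2 := rfl
          _ ≤ x ^ (-(3:ℝ)/4) * (C ^ 2 * ε) := by
              apply mul_le_mul_of_nonneg_left this (Real.rpow_nonneg hx0.le _)
          _ = (C ^ 2 * ε) * x ^ (-(3:ℝ)/4) := by ring
      have hval : ∫ r in R₀..m, (C ^ 2 * ε) * r ^ (-(3:ℝ)/4)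
          = (C ^ 2 * ε) * ((m ^ ((1:ℝ)/4) - R₀ ^ ((1:ℝ)/4)) / ((1:ℝ)/4)) := by
        rw [intervalIntegral.integral_const_mul, integral_rpow (Or.inl (by norm_num))]
        norm_num
      have hdiff : m ^ ((1:ℝ)/4) - R₀ ^ ((1:ℝ)/4) ≤ K := by
        rcases le_or_gt R₀ M with hRM | hRM
        · have hmM : m ≤ M := max_le hRM (min_le_right _ _)
          have : m ^ ((1:ℝ)/4) ≤ M ^ ((1:ℝ)/4) :=
            Real.rpow_le_rpow hmpos.le hmM (by norm_num)
          have hR0nn : 0 ≤ R₀ ^ ((1:ℝ)/4) := Real.rpow_nonneg hR₀.le _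
          rw [hM14] at this
          linarith
        · have hmR : m = R₀ := by
            have : min T M ≤ R₀ := le_trans (min_le_right _ _) hRM.le
            simp [hmdef, max_eq_left this]
          rw [hmR]
          simp [hK.le]
      calc I m ≤ (C ^ 2 * ε) * ((m ^ ((1:ℝ)/4) - R₀ ^ ((1:ℝ)/4)) / ((1:ℝ)/4)) := by
            rw [← hval]; exact hb
        _ ≤ (C ^ 2 * ε) * (K / ((1:ℝ)/4)) := by
            apply mul_le_mul_of_nonneg_left _ (by positivity)
            apply div_le_div_of_nonneg_right hdiff -- careful: dividing by 1/4
            norm_num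
        _ = 256 * C ^ 4 * ε := by rw [hKdef]; ring
        _ ≤ 256 * C ^ 4 * (1 / (1024 * C ^ 4)) := by
            apply mul_le_mul_of_nonneg_left hε₀ (by positivity)
        _ ≤ 1/4 := by
            rw [mul_one_div, div_le_iff₀ (by positivity)]
            ring_nf
            nlinarith [pow_pos hC 4]
    -- piece 2
    have hpiece2 : (∫ r in m..T, f r) ≤ 1/4 := by
      rcases le_or_gt T M with hTM | hTM
      · have hmT : m = T := le_antisymm hm2 (le_max_of_le_right (le_min le_rfl hTM))
        rw [hmT]
        simp
      · have hMm : M ≤ m := le_max_of_le_right (by rw [min_eq_right hTM.le])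
        have hb : (∫ r in m..T, f r) ≤ ∫ r in m..T, (4 * C ^ 2) * r ^ (-(5:ℝ)/4) := by
          apply intervalIntegral.integral_mono_on hm2 (aux_f_intble hu hmpos hm2)
            ((aux_rpow_intble hmpos hm2).const_mul _)
          intro x hx
          have hx0 : (0:ℝ) < x := lt_of_lt_of_le hmpos hx.1
          have hxR : R₀ ≤ x := le_trans hm1 hx.1
          have hux := hu2 x ⟨hxR, hx.2⟩
          have husq2 : u x ^ 2 ≤ (2 * C * x ^ (-(1:ℝ)/4)) ^ 2 :=
            pow_le_pow_left₀ (hupos x) hux 2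
          calc f x ≤ x ^ (-(3:ℝ)/4) * (2 * C * x ^ (-(1:ℝ)/4)) ^ 2 :=
                mul_le_mul_of_nonneg_left husq2 (Real.rpow_nonneg hx0.le _)
            _ = 4 * C ^ 2 * (x ^ (-(3:ℝ)/4) * (x ^ (-(1:ℝ)/4)) ^ 2) := by ring
            _ = (4 * C ^ 2) * x ^ (-(5:ℝ)/4) := by
                rw [← Real.rpow_natCast (x ^ (-(1:ℝ)/4)) 2, ← Real.rpow_mul hx0.le,
                  ← Real.rpow_add hx0]
                norm_num
        have hval : ∫ r in m..T, (4 * C ^ 2) * r ^ (-(5:ℝ)/4)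
            = (4 * C ^ 2) * ((T ^ (-(1:ℝ)/4) - m ^ (-(1:ℝ)/4)) / (-(1:ℝ)/4)) := by
          rw [intervalIntegral.integral_const_mul,
            integral_rpow (Or.inr ⟨by norm_num, by
              rw [Set.uIcc_of_le hm2]
              intro hmem
              exact absurd hmem.1 (not_le.mpr hmpos)⟩)]
          norm_num
        have hmono : m ^ (-(1:ℝ)/4) ≤ M ^ (-(1:ℝ)/4) :=
          Real.rpow_le_rpow_of_nonpos hM hMm (by norm_num)
        have hM14' : M ^ (-(1:ℝ)/4) = 1 / K := by
          rw [show (-(1:ℝ)/4) = -((1:ℝ)/4) by norm_num, Real.rpow_neg hM.le, hM14,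
            one_div]
        have hTnn : 0 ≤ T ^ (-(1:ℝ)/4) :=
          Real.rpow_nonneg (le_trans hR₀.le hT) _
        calc (∫ r in m..T, f r)
            ≤ (4 * C ^ 2) * ((T ^ (-(1:ℝ)/4) - m ^ (-(1:ℝ)/4)) / (-(1:ℝ)/4)) := by
              rw [← hval]; exact hb
          _ = (16 * C ^ 2) * (m ^ (-(1:ℝ)/4) - T ^ (-(1:ℝ)/4)) := by ring
          _ ≤ (16 * C ^ 2) * (1 / K) := by
              apply mul_le_mul_of_nonneg_left _ (by positivity)
              rw [← hM14']
              linarith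
          _ = 1/4 := by rw [hKdef]; field_simp; ring
    linarith [hsplit, hpiece1, hpiece2]
  -- conclude I ≤ 1 everywhere by IVT
  have hI1 : ∀ R ∈ Set.Ici R₀, I R ≤ 1 := by
    by_contra hcon
    push_neg at hcon
    obtain ⟨R₁, hR₁, hIR₁⟩ := hcon
    have hcont : ContinuousOn I (Set.Icc R₀ R₁) := by
      have h := intervalIntegral.continuousOn_primitive_interval'
        (aux_f_intble hu hR₀ hR₁) (Set.left_mem_uIcc (a := R₀) (b := R₁))
      rwa [Set.uIcc_of_le hR₁] at h
    have hIR0 : I R₀ = 0 := intervalIntegral.integral_same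
    have hIVT := intermediate_value_Icc hR₁ hcont
    have h1mem : (1:ℝ) ∈ Set.Icc (I R₀) (I R₁) := by
      rw [hIR0]; exact ⟨by norm_num, hIR₁.le⟩
    obtain ⟨T, hTmem, hIT⟩ := hIVT h1mem
    have : I T ≤ 1/2 := by
      apply himprove T hTmem.1
      intro r hr
      calc I r ≤ I T := hImono r T hr.1 hr.2
        _ = 1 := hIT
    rw [hIT] at this
    norm_num at this
  -- final bound
  refine ⟨2 * C, by positivity, ?_⟩
  intro R hR
  have h1 := hmain R hR
  have h2 := hI1 R hR
  have hRpos : (0:ℝ) < R := lt_of_lt_of_le hR₀ hR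
  have hpow : (0:ℝ) ≤ R ^ (-(1:ℝ)/4) := Real.rpow_nonneg hRpos.le _
  calc u R ≤ C * R ^ (-(1:ℝ)/4) * (1 + I R) := h1
    _ ≤ C * R ^ (-(1:ℝ)/4) * 2 := by
        apply mul_le_mul_of_nonneg_left (by linarith) (by positivity)
    _ = 2 * C * R ^ (-(1:ℝ)/4) := by ring
end
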